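/- arXiv:1604.00524 — 7 statements merged into one kernel-verified Lean document; each statement's English description precedes it below -/
import Mathlib

section
/- Let k be a field of characteristic p > 0, G a finite group, R := k[X]/(X^p), and α : R → kG := MonoidAlgebra k G a k-algebra homomorphism whose image is contained in the k-linear span of an abelian subgroup A of G, and such that kG is flat as a left R-module via r • b := α(r)b. Regard kG as a (kG, R)-bimodule, kG acting by left multiplication and R acting by right multiplication through α. Then for every R-module M there is an isomorphism of kG-modules α_*(M) := kG ⊗_R M ≅ Hom_R(kG, M) =: α_!(M), where kG acts on kG ⊗_R M through left multiplication on the left tensor factor, and acts on the space Hom_R(kG, M) of left R-linear maps by (a • f)(b) = f(b * a). -/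
/-!
Since `kG` is finite and flat over the noetherian ring `R`, it is projective, so
`Hom_R(kG, M) ≅ Hom_R(kG, R) ⊗_R M`. Everything then reduces to an isomorphism of
`(kG, R)`-bimodules `kG ≅ Hom_R(kG, R)`. Now `R` is a Frobenius algebra for the functional
`θ` = coefficient of `X^(p-1)`, and `kG` is a symmetric algebra for `τ` = coefficient of `1`.
Pulling `τ` back through `θ` gives the relative Frobenius map `φ : kG → R`,
`θ (r φ(x)) = τ (α(r) x)`, which is `R`-linear on both sides, and `b ↦ (c ↦ φ(c b))` is
injective and surjective by the nondegeneracy of `τ` and `θ`.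
-/

open TensorProduct

noncomputable section

/-- `R = k[X]/(X^p)`. -/
abbrev Rp (k : Type*) [Field k] (p : ℕ) : Type _ :=
  Polynomial k ⧸ Ideal.span {(Polynomial.X : Polynomial k) ^ p}

variable (k : Type*) [Field k] (p : ℕ) (G : Type*) [Group G]

/-- The group algebra `kG` regarded as a left `R`-module via `r • b = α r * b`. -/
def LeftKG (α : Rp k p →ₐ[k] MonoidAlgebra k G) : Type _ := MonoidAlgebra k G

variable {k p G} in
/-- Reinterpret an element of `LeftKG` as an element of the group algebra. -/
def LeftKG.toMA {α : Rp k p →ₐ[k] MonoidAlgebra k G} (b : LeftKG k p G α) :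
    MonoidAlgebra k G := b

variable {k p G} in
/-- Reinterpret an element of the group algebra as an element of `LeftKG`. -/
def LeftKG.ofMA {α : Rp k p →ₐ[k] MonoidAlgebra k G} (b : MonoidAlgebra k G) :
    LeftKG k p G α := b

instance (α : Rp k p →ₐ[k] MonoidAlgebra k G) : AddCommGroup (LeftKG k p G α) :=
  inferInstanceAs (AddCommGroup (MonoidAlgebra k G))

instance (α : Rp k p →ₐ[k] MonoidAlgebra k G) : Module (Rp k p) (LeftKG k p G α) :=
  Module.compHom (MonoidAlgebra k G) α.toRingHom

/-- The group algebra `kG` regarded as a `(kG, R)`-bimodule: `kG` acts by left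
multiplication, and `R` acts (on the right) via `r • b = b * α r`. -/
def RightKG (α : Rp k p →ₐ[k] MonoidAlgebra k G) : Type _ := MonoidAlgebra k G

variable {k p G} in
/-- Reinterpret an element of `RightKG` as an element of the group algebra. -/
def RightKG.toMA {α : Rp k p →ₐ[k] MonoidAlgebra k G} (b : RightKG k p G α) :
    MonoidAlgebra k G := b

instance (α : Rp k p →ₐ[k] MonoidAlgebra k G) : AddCommGroup (RightKG k p G α) :=
  inferInstanceAs (AddCommGroup (MonoidAlgebra k G))

instance (α : Rp k p →ₐ[k] MonoidAlgebra k G) :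
    Module (MonoidAlgebra k G) (RightKG k p G α) :=
  inferInstanceAs (Module (MonoidAlgebra k G) (MonoidAlgebra k G))

instance (α : Rp k p →ₐ[k] MonoidAlgebra k G) : Module (Rp k p) (RightKG k p G α) :=
  Module.compHom (MonoidAlgebra k G)
    (α.toRingHom.toOpposite fun x y => by
      rw [Commute, SemiconjBy, ← map_mul, ← map_mul, mul_comm])

instance (α : Rp k p →ₐ[k] MonoidAlgebra k G) :
    SMulCommClass (Rp k p) (MonoidAlgebra k G) (RightKG k p G α) :=
  ⟨fun r a b => mul_assoc a (RightKG.toMA b) (α r)⟩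

/-- Right multiplication by `a ∈ kG` on `kG`, as a map of left `R`-modules. -/
def rmul (α : Rp k p →ₐ[k] MonoidAlgebra k G) (a : MonoidAlgebra k G) :
    LeftKG k p G α →ₗ[Rp k p] LeftKG k p G α where
  toFun b := LeftKG.ofMA (b.toMA * a)
  map_add' x y := add_mul x.toMA y.toMA a
  map_smul' r b := mul_assoc (α r) b.toMA a

/-- `kG` acts on the left `R`-linear maps `Hom_R(kG, M)` by `(a • f)(b) = f (b * a)`. -/
instance (α : Rp k p →ₐ[k] MonoidAlgebra k G) (M : Type*) [AddCommGroup M]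
    [Module (Rp k p) M] :
    Module (MonoidAlgebra k G) (LeftKG k p G α →ₗ[Rp k p] M) where
  smul a f := f.comp (rmul k p G α a)
  one_smul f := by
    ext b
    show f (LeftKG.ofMA (b.toMA * 1)) = f b
    rw [mul_one]
    rfl
  mul_smul a a' f := by
    ext b
    show f (LeftKG.ofMA (b.toMA * (a * a')))
      = f (LeftKG.ofMA ((LeftKG.ofMA (b.toMA * a) : LeftKG k p G α).toMA * a'))
    rw [show (LeftKG.ofMA (b.toMA * a) : LeftKG k p G α).toMA = b.toMA * a from rfl,
      mul_assoc]
  smul_zero a := rfl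
  smul_add a f g := rfl
  add_smul a a' f := by
    ext b
    show f (LeftKG.ofMA (b.toMA * (a + a')))
      = f (LeftKG.ofMA (b.toMA * a)) + f (LeftKG.ofMA (b.toMA * a'))
    rw [show (LeftKG.ofMA (b.toMA * (a + a')) : LeftKG k p G α)
        = LeftKG.ofMA (b.toMA * a) + LeftKG.ofMA (b.toMA * a') by
          show b.toMA * (a + a') = b.toMA * a + b.toMA * a'
          rw [mul_add],
      map_add]
  zero_smul f := by
    ext b
    show f (LeftKG.ofMA (b.toMA * 0)) = 0
    rw [show (LeftKG.ofMA (b.toMA * 0) : LeftKG k p G α) = 0 by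
        show b.toMA * 0 = 0; rw [mul_zero]]
    exact map_zero f

section

variable {k p G}

section MulForm

variable {A : Type*} [Ring A] [Algebra k A]

def mulForm (f : Module.Dual k A) : LinearMap.BilinForm k A :=
  (LinearMap.mul k A).compr₂ f

@[simp]
lemma mulForm_apply (f : Module.Dual k A) (a b : A) : mulForm f a b = f (a * b) := rfl

lemma mulForm_nondegenerate {f : Module.Dual k A} (hf : ∀ a b, f (a * b) = f (b * a))
    (h : ∀ a, (∀ b, f (a * b) = 0) → a = 0) : (mulForm f).Nondegenerate :=
  (LinearMap.IsSymm.isRefl ⟨fun a b => by simp [hf a b]⟩).nondegenerate_iff_separatingLeft.mpr h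

end MulForm

section FrobeniusMap

variable {R S : Type*} [CommRing R] [Algebra k R] [FiniteDimensional k R]
  [Ring S] [Algebra k S] {θ : Module.Dual k R} (hθ : (mulForm θ).Nondegenerate)
  (τ : Module.Dual k S) (α : R →ₐ[k] S)

/-- The relative Frobenius map: the unique `φ` with `θ (r * φ x) = τ (α r * x)` for all `r`. -/
def frobeniusMap : S →ₗ[k] R :=
  ((mulForm θ).toDual hθ).symm.toLinearMap ∘ₗ (mulForm τ ∘ₗ α.toLinearMap).flip

lemma apply_mul_frobeniusMap (r : R) (x : S) :
    θ (r * frobeniusMap hθ τ α x) = τ (α r * x) := by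
  rw [mul_comm, ← mulForm_apply, frobeniusMap, LinearMap.comp_apply, LinearEquiv.coe_coe,
    LinearMap.BilinForm.apply_toDual_symm_apply]
  rfl

include hθ in
lemma eq_of_forall_apply_mul_eq {x y : R} (h : ∀ r, θ (r * x) = θ (r * y)) : x = y :=
  ((mulForm θ).toDual hθ).injective <| LinearMap.ext fun r => by
    simpa [LinearMap.BilinForm.toDual_def, mul_comm] using h r

lemma apply_frobeniusMap (x : S) : θ (frobeniusMap hθ τ α x) = τ x := by
  simpa using apply_mul_frobeniusMap hθ τ α 1 x

lemma frobeniusMap_map_mul (s : R) (x : S) :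
    frobeniusMap hθ τ α (α s * x) = s * frobeniusMap hθ τ α x :=
  eq_of_forall_apply_mul_eq hθ fun r => by
    rw [apply_mul_frobeniusMap, ← mul_assoc, ← map_mul, ← mul_assoc, apply_mul_frobeniusMap]

lemma frobeniusMap_mul_map (hτ : ∀ a b, τ (a * b) = τ (b * a)) (s : R) (x : S) :
    frobeniusMap hθ τ α (x * α s) = s * frobeniusMap hθ τ α x :=
  eq_of_forall_apply_mul_eq hθ fun r => by
    rw [apply_mul_frobeniusMap, ← mul_assoc, hτ, ← mul_assoc, ← map_mul, ← mul_assoc,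
      mul_comm s r, apply_mul_frobeniusMap]

end FrobeniusMap

section GroupAlgebraTrace

variable (k G) in
def groupAlgebraTrace : Module.Dual k (MonoidAlgebra k G) :=
  Finsupp.lapply 1 ∘ₗ (MonoidAlgebra.coeffLinearEquiv k).toLinearMap

lemma groupAlgebraTrace_apply (x : MonoidAlgebra k G) : groupAlgebraTrace k G x = x.coeff 1 :=
  rfl

lemma groupAlgebraTrace_mul_comm (x y : MonoidAlgebra k G) :
    groupAlgebraTrace k G (x * y) = groupAlgebraTrace k G (y * x) := by
  rw [groupAlgebraTrace_apply, groupAlgebraTrace_apply, MonoidAlgebra.coeff_mul_apply_right x y,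
    MonoidAlgebra.coeff_mul_apply_left y x]
  simp only [one_mul, mul_one, mul_comm]

lemma mulForm_groupAlgebraTrace_nondegenerate : (mulForm (groupAlgebraTrace k G)).Nondegenerate :=
  mulForm_nondegenerate groupAlgebraTrace_mul_comm fun x hx => by
    ext g
    simpa [groupAlgebraTrace_apply] using hx (MonoidAlgebra.single g⁻¹ 1)

end GroupAlgebraTrace

section TruncatedPolynomial

open Polynomial

instance : Module.Finite k (Rp k p) := (AdjoinRoot.powerBasis' (monic_X_pow p)).finite

variable (k p) in
def topCoeff : Module.Dual k (Rp k p) :=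
  lcoeff k (p - 1) ∘ₗ AdjoinRoot.modByMonicHom (monic_X_pow p)

variable [NeZero p]

lemma topCoeff_mk (f : k[X]) :
    topCoeff k p (Ideal.Quotient.mk _ f) = f.coeff (p - 1) := by
  change lcoeff k (p - 1) (AdjoinRoot.modByMonicHom (monic_X_pow p) (AdjoinRoot.mk _ f)) = _
  conv_rhs => rw [← modByMonic_add_div f (X ^ p)]
  rw [AdjoinRoot.modByMonicHom_mk, lcoeff_apply, coeff_add,
    coeff_X_pow_mul', if_neg (by have := NeZero.ne p; omega), add_zero]

lemma mulForm_topCoeff_nondegenerate : (mulForm (topCoeff k p)).Nondegenerate := by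
  refine mulForm_nondegenerate (fun a b => by rw [mul_comm]) fun a ha => ?_
  obtain ⟨f, rfl⟩ := Ideal.Quotient.mk_surjective a
  rw [Ideal.Quotient.eq_zero_iff_mem, Ideal.mem_span_singleton]
  refine X_pow_dvd_iff.mpr fun d hd => ?_
  have := ha (Ideal.Quotient.mk _ (X ^ (p - 1 - d)))
  rwa [← map_mul, topCoeff_mk, coeff_mul_X_pow', if_pos (by omega),
    Nat.sub_sub_self (by omega)] at this

end TruncatedPolynomial

section Duality

variable (α : Rp k p →ₐ[k] MonoidAlgebra k G)

lemma LeftKG.toMA_add (c c' : LeftKG k p G α) : (c + c').toMA = c.toMA + c'.toMA := rfl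

lemma LeftKG.toMA_smul (r : Rp k p) (c : LeftKG k p G α) : (r • c).toMA = α r * c.toMA := rfl

lemma RightKG.toMA_add (b b' : RightKG k p G α) : (b + b').toMA = b.toMA + b'.toMA := rfl

lemma RightKG.toMA_smul (r : Rp k p) (b : RightKG k p G α) : (r • b).toMA = b.toMA * α r := rfl

instance : Module k (LeftKG k p G α) := inferInstanceAs (Module k (MonoidAlgebra k G))

instance : IsScalarTower k (Rp k p) (LeftKG k p G α) :=
  ⟨fun c r b => show α (c • r) * b.toMA = c • (α r * b.toMA) by
    rw [map_smul, smul_mul_assoc]⟩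

instance [Finite G] : Module.Finite (Rp k p) (LeftKG k p G α) :=
  have : Module.Finite k (LeftKG k p G α) :=
    inferInstanceAs (Module.Finite k (MonoidAlgebra k G))
  Module.Finite.of_restrictScalars_finite k _ _

variable [NeZero p]

abbrev groupAlgebraFrobeniusMap : MonoidAlgebra k G →ₗ[k] Rp k p :=
  frobeniusMap mulForm_topCoeff_nondegenerate (groupAlgebraTrace k G) α

def dualPairing : RightKG k p G α →ₗ[Rp k p] Module.Dual (Rp k p) (LeftKG k p G α) where
  toFun b :=
    { toFun c := groupAlgebraFrobeniusMap α (c.toMA * b.toMA)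
      map_add' c c' := by rw [LeftKG.toMA_add, add_mul, map_add]
      map_smul' r c := by
        rw [LeftKG.toMA_smul, mul_assoc, frobeniusMap_map_mul, RingHom.id_apply, smul_eq_mul] }
  map_add' b b' := LinearMap.ext fun c => by
    simp only [RightKG.toMA_add, mul_add, map_add, LinearMap.coe_mk, AddHom.coe_mk,
      LinearMap.add_apply]
  map_smul' r b := LinearMap.ext fun c => by
    simp only [LinearMap.coe_mk, AddHom.coe_mk, LinearMap.smul_apply, RingHom.id_apply,
      smul_eq_mul, RightKG.toMA_smul, ← mul_assoc]
    exact frobeniusMap_mul_map _ _ _ groupAlgebraTrace_mul_comm _ _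

lemma dualPairing_apply (b : RightKG k p G α) (c : LeftKG k p G α) :
    dualPairing α b c = groupAlgebraFrobeniusMap α (c.toMA * b.toMA) := rfl

lemma dualPairing_smul_apply (a : MonoidAlgebra k G) (b : RightKG k p G α)
    (c : LeftKG k p G α) :
    dualPairing α (a • b) c = dualPairing α b (LeftKG.ofMA (c.toMA * a)) :=
  congrArg (groupAlgebraFrobeniusMap α) (mul_assoc c.toMA a b.toMA).symm

lemma dualPairing_injective : Function.Injective (dualPairing α) := by
  refine (injective_iff_map_eq_zero _).mpr fun b hb =>
    mulForm_groupAlgebraTrace_nondegenerate.2 b.toMA fun c => ?_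
  calc groupAlgebraTrace k G (c * b.toMA)
      = topCoeff k p (dualPairing α b (LeftKG.ofMA c)) :=
        (apply_frobeniusMap mulForm_topCoeff_nondegenerate _ α _).symm
    _ = 0 := by rw [hb, LinearMap.zero_apply, map_zero]

variable [Finite G]

lemma dualPairing_surjective : Function.Surjective (dualPairing α) := by
  intro f
  let g : Module.Dual k (MonoidAlgebra k G) := topCoeff k p ∘ₗ f.restrictScalars k
  let b : RightKG k p G α :=
    ((mulForm (groupAlgebraTrace k G)).toDual mulForm_groupAlgebraTrace_nondegenerate).symm g
  have hb (x : MonoidAlgebra k G) : groupAlgebraTrace k G (b.toMA * x) = g x :=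
    LinearMap.BilinForm.apply_toDual_symm_apply
      (hB := mulForm_groupAlgebraTrace_nondegenerate) g x
  refine ⟨b, LinearMap.ext fun c =>
    eq_of_forall_apply_mul_eq mulForm_topCoeff_nondegenerate fun r => ?_⟩
  rw [dualPairing_apply, apply_mul_frobeniusMap, ← mul_assoc, groupAlgebraTrace_mul_comm]
  exact (hb _).trans congr(topCoeff k p $(map_smul f r c))

variable [Module.Projective (Rp k p) (LeftKG k p G α)]
  (M : Type*) [AddCommGroup M] [Module (Rp k p) M]

def tensorEquivHom :
    (RightKG k p G α ⊗[Rp k p] M) ≃ₗ[Rp k p] (LeftKG k p G α →ₗ[Rp k p] M) :=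
  (TensorProduct.congr (.ofBijective _ ⟨dualPairing_injective α, dualPairing_surjective α⟩)
    (.refl _ M)).trans (dualTensorHomEquiv _ _ _)

lemma tensorEquivHom_tmul (b : RightKG k p G α) (m : M) (c : LeftKG k p G α) :
    tensorEquivHom α M (b ⊗ₜ m) c = dualPairing α b c • m := by
  simp only [tensorEquivHom, dualTensorHomEquiv, LinearEquiv.trans_apply, congr_tmul,
    LinearEquiv.refl_apply]
  rfl

lemma tensorEquivHom_smul (a : MonoidAlgebra k G) (x : RightKG k p G α ⊗[Rp k p] M) :
    tensorEquivHom α M (a • x) = a • tensorEquivHom α M x := by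
  induction x with
  | zero => rw [smul_zero, map_zero, smul_zero]
  | add x y hx hy => rw [smul_add, map_add, map_add, smul_add, hx, hy]
  | tmul b m =>
    refine LinearMap.ext fun c => ?_
    rw [smul_tmul', tensorEquivHom_tmul, dualPairing_smul_apply]
    exact (tensorEquivHom_tmul α M b m _).symm

end Duality

end

theorem stmt0 [Fintype G] [Fact p.Prime]
    (α : Rp k p →ₐ[k] MonoidAlgebra k G)
    (hflat : Module.Flat (Rp k p) (LeftKG k p G α))
    (M : Type*) [AddCommGroup M] [Module (Rp k p) M] :
    Nonempty ((RightKG k p G α ⊗[Rp k p] M) ≃ₗ[MonoidAlgebra k G]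
      (LeftKG k p G α →ₗ[Rp k p] M)) := by
  have : NeZero p := ⟨(Fact.out : p.Prime).ne_zero⟩
  have : Module.FinitePresentation (Rp k p) (LeftKG k p G α) :=
    Module.finitePresentation_of_finite _ _
  have := Module.Flat.projective_of_finitePresentation (R := Rp k p) (M := LeftKG k p G α)
  exact ⟨(tensorEquivHom α M).toAddEquiv.toLinearEquiv (tensorEquivHom_smul α M)⟩
end
end

section
/- Let k be a field of characteristic p > 0, G a finite group, R := k[X]/(X^p), and α : R → kG := MonoidAlgebra k G any k-algebra homomorphism. Regard kG as a left R-module via r • b := α(r)b. Then the left kG-module Hom_R(kG, R) of left R-linear maps f : kG → R, with kG acting by (a • f)(b) = f(b * a), is isomorphic to kG with its left regular action. -/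
open TensorProduct

noncomputable section

variable (k : Type*) [Field k] (p : ℕ) (G : Type*) [Group G]

/-!
Both `R = k[X]/(X^p)` and `kG` are Frobenius algebras: the coefficient of `X^(p-1)`, resp. of
`1 ∈ G`, is a functional `ε` for which `r ↦ ε (· * r)` identifies the algebra with its `k`-dual.
For a Frobenius algebra `R` and any `R`-module `M`, composing with `ε` identifies `Hom_R(M, R)`
with `Hom_k(M, k)`. For `M = kG` this identification commutes with the right multiplications
of `kG`, and the Frobenius isomorphism `Hom_k(kG, k) ≅ kG` of `kG` finishes the proof.
-/

section FrobeniusForm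

variable {k}
variable {A : Type*} [Ring A] [Algebra k A]

def frobeniusDual (ε : Module.Dual k A) : A →ₗ[k] Module.Dual k A :=
  (LinearMap.mul k A).flip.compr₂ ε

@[simp]
theorem frobeniusDual_apply (ε : Module.Dual k A) (r s : A) : frobeniusDual ε r s = ε (s * r) :=
  rfl

theorem frobeniusDual_bijective [FiniteDimensional k A] {ε : Module.Dual k A}
    (hε : ∀ r, (∀ s, ε (s * r) = 0) → r = 0) : Function.Bijective (frobeniusDual ε) := by
  have hinj : Function.Injective (frobeniusDual ε) := by
    rw [← LinearMap.ker_eq_bot, LinearMap.ker_eq_bot']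
    exact fun r hr => hε r fun s => LinearMap.congr_fun hr s
  exact ⟨hinj, (LinearMap.injective_iff_surjective_of_finrank_eq_finrank
    Subspace.dual_finrank_eq.symm).mp hinj⟩

variable {M : Type*} [AddCommGroup M] [Module A M] [Module k M] [IsScalarTower k A M]

def homToDual (ε : Module.Dual k A) : (M →ₗ[A] A) →+ Module.Dual k M :=
  AddMonoidHom.mk' (fun f => ε ∘ₗ f.restrictScalars k) fun f g => by ext; simp

@[simp]
theorem homToDual_apply (ε : Module.Dual k A) (f : M →ₗ[A] A) (m : M) :
    homToDual ε f m = ε (f m) :=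
  rfl

theorem homToDual_injective {ε : Module.Dual k A} (hε : Function.Injective (frobeniusDual ε)) :
    Function.Injective (homToDual (M := M) ε) := by
  intro f g hfg
  ext m
  refine hε (LinearMap.ext fun s => ?_)
  have := LinearMap.congr_fun hfg (s • m)
  rwa [homToDual_apply, homToDual_apply, f.map_smul, g.map_smul] at this

theorem homToDual_surjective {ε : Module.Dual k A} (hε : Function.Bijective (frobeniusDual ε)) :
    Function.Surjective (homToDual (M := M) ε) := by
  intro g
  let e := LinearEquiv.ofBijective _ hε
  have he : ∀ r s, e r s = ε (s * r) := fun _ _ => rfl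
  -- `f m` is the element of `A` that represents the functional `s ↦ g (s • m)`.
  let f : M →ₗ[A] A :=
    { toFun m := e.symm (g ∘ₗ (LinearMap.toSpanSingleton A M m).restrictScalars k)
      map_add' m m' := e.injective <| by ext s; simp [smul_add]
      map_smul' t m := e.injective <| by
        ext s
        rw [RingHom.id_apply, smul_eq_mul, he (t * _), ← mul_assoc, ← he, e.apply_symm_apply,
          e.apply_symm_apply]
        simp [mul_smul] }
  refine ⟨f, LinearMap.ext fun m => ?_⟩
  calc ε (f m) = e (f m) 1 := by rw [he, one_mul]
    _ = g m := by simp [f]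

end FrobeniusForm

namespace Rp

open Polynomial

variable {p}

def lastCoeff (hp : 0 < p) : Module.Dual k (Rp k p) :=
  (Submodule.restrictScalars k (Ideal.span {X ^ p})).liftQ (lcoeff k (p - 1)) (by
    intro f hf
    obtain ⟨g, rfl⟩ := Ideal.mem_span_singleton.mp hf
    simp [coeff_X_pow_mul', hp]) ∘ₗ
  (Submodule.Quotient.restrictScalarsEquiv k _).symm.toLinearMap

theorem lastCoeff_mk (hp : 0 < p) (f : k[X]) :
    lastCoeff k hp (Ideal.Quotient.mk _ f) = f.coeff (p - 1) :=
  rfl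

theorem eq_zero_of_lastCoeff_mul_eq_zero (hp : 0 < p) (r : Rp k p)
    (h : ∀ s, lastCoeff k hp (s * r) = 0) : r = 0 := by
  obtain ⟨f, rfl⟩ := Ideal.Quotient.mk_surjective r
  rw [Ideal.Quotient.eq_zero_iff_mem, Ideal.mem_span_singleton, X_pow_dvd_iff]
  intro d hd
  have := h (Ideal.Quotient.mk _ (X ^ (p - 1 - d)))
  rwa [← map_mul, lastCoeff_mk, coeff_X_pow_mul', if_pos (by omega),
    show p - 1 - (p - 1 - d) = d by omega] at this

end Rp

namespace MonoidAlgebra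

variable {k G}

def coeffOne : Module.Dual k (MonoidAlgebra k G) :=
  Finsupp.lapply 1 ∘ₗ (coeffLinearEquiv k).toLinearMap

theorem coeffOne_apply (a : MonoidAlgebra k G) : coeffOne a = a.coeff 1 :=
  rfl

theorem eq_zero_of_coeffOne_mul_eq_zero (a : MonoidAlgebra k G)
    (h : ∀ b, coeffOne (b * a) = 0) : a = 0 := by
  ext g
  simpa [coeffOne_apply] using h (single g⁻¹ 1)

end MonoidAlgebra

instance inst_s2 : Module.Finite k (Rp k p) := (Polynomial.monic_X_pow p).finite_quotient

instance (α : Rp k p →ₐ[k] MonoidAlgebra k G) : Module k (LeftKG k p G α) :=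
  inferInstanceAs (Module k (MonoidAlgebra k G))

instance (α : Rp k p →ₐ[k] MonoidAlgebra k G) : IsScalarTower k (Rp k p) (LeftKG k p G α) :=
  ⟨fun c r b => (congrArg (· * b.toMA) (map_smul α c r)).trans (smul_mul_assoc c (α r) b.toMA)⟩

section

variable {k p G}

def LeftKG.ofMALinearEquiv (α : Rp k p →ₐ[k] MonoidAlgebra k G) :
    MonoidAlgebra k G ≃ₗ[k] LeftKG k p G α :=
  LinearEquiv.refl k (MonoidAlgebra k G)

def MonoidAlgebra.dualEquiv [Fintype G] :
    MonoidAlgebra k G ≃ₗ[k] Module.Dual k (MonoidAlgebra k G) :=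
  LinearEquiv.ofBijective _ (frobeniusDual_bijective MonoidAlgebra.eq_zero_of_coeffOne_mul_eq_zero)

theorem MonoidAlgebra.dualEquiv_apply [Fintype G] (a b : MonoidAlgebra k G) :
    MonoidAlgebra.dualEquiv a b = MonoidAlgebra.coeffOne (b * a) :=
  rfl

def homToGroupAlgebra [Fintype G] (hp : 0 < p) (α : Rp k p →ₐ[k] MonoidAlgebra k G) :
    (LeftKG k p G α →ₗ[Rp k p] Rp k p) →ₗ[MonoidAlgebra k G] MonoidAlgebra k G where
  toFun f := MonoidAlgebra.dualEquiv.symm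
    ((LeftKG.ofMALinearEquiv α).dualMap (homToDual (Rp.lastCoeff k hp) f))
  map_add' f g := by simp only [map_add]
  map_smul' a f := MonoidAlgebra.dualEquiv.injective <| LinearMap.ext fun b => by
    rw [LinearEquiv.apply_symm_apply, RingHom.id_apply, smul_eq_mul,
      MonoidAlgebra.dualEquiv_apply, ← mul_assoc, ← MonoidAlgebra.dualEquiv_apply,
      LinearEquiv.apply_symm_apply]
    rfl

theorem homToGroupAlgebra_bijective [Fintype G] (hp : 0 < p)
    (α : Rp k p →ₐ[k] MonoidAlgebra k G) :
    Function.Bijective (homToGroupAlgebra hp α) := by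
  have hR := frobeniusDual_bijective (Rp.eq_zero_of_lastCoeff_mul_eq_zero k hp)
  exact MonoidAlgebra.dualEquiv.symm.bijective.comp <|
    (LeftKG.ofMALinearEquiv α).dualMap.bijective.comp
      ⟨homToDual_injective hR.1, homToDual_surjective hR⟩

end

set_option synthInstance.maxHeartbeats 1000000 in
theorem stmt2 [Fintype G] [Fact p.Prime]
    (α : Rp k p →ₐ[k] MonoidAlgebra k G) :
    Nonempty ((LeftKG k p G α →ₗ[Rp k p] Rp k p) ≃ₗ[MonoidAlgebra k G]
      MonoidAlgebra k G) :=
  ⟨.ofBijective _ (homToGroupAlgebra_bijective (Fact.out : p.Prime).pos α)⟩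
end
end

section
/- Let A be a ring and M an endofinite A-module. Then there exists a family (M_i)_{i ∈ ι} of A-submodules of M such that M is the internal direct sum of the M_i (the family of submodules is independent and its supremum is all of M) and each M_i is a nonzero indecomposable A-module (necessarily itself endofinite). -/
/-- An `A`-module `M` is *endofinite* if it has finite length as a module over its
endomorphism ring `Module.End A M`, which acts on `M` by evaluation `f • m = f m`. -/
def IsEndofinite (A M : Type*) [Ring A] [AddCommGroup M] [Module A M] : Prop :=
  IsFiniteLength (Module.End A M) M

/-
Write `E = End_A(M)`. The key fact is that a directed union `U` of direct summands of `M` is again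
a summand. Every element of `U` lies in a summand contained in `U`, so `U` is locally a retract
of `M`; this embeds the lattice of `End_A(U)`-submodules of `U` into that of `E`-submodules of
`M`, so `U` is Artinian over its own endomorphism ring. Directed families of cosets of
`End_A(U)`-submodules of `U` then have a common point, which makes `U` algebraically compact:
the compatible partial retractions onto `U` glue to a global one.

Zorn's lemma now yields a maximal independent family of indecomposable submodules whose sum `S`
is a summand. If a complement `C` of `S` were nonzero, pick `x ∈ C` such that `E x` is minimal
among the cyclic `E`-submodules generated outside `S`, and (Zorn again) a maximal summand
`K ⊇ S` having a complement `P ∋ x`. Then `P` is indecomposable: if `P = Q ⊕ R` with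
`x = q + r` and `r ≠ 0`, minimality gives `g ∈ E` with `g r = x`, and the graph of `R → Q`,
`r' ↦ π_Q (g r')`, is a complement of `Q ⊕ K` through `x`. Adding `P` to the family contradicts
maximality.
-/

open Module Submodule

theorem exists_forall_mem_of_directed_affineSubspace {R T κ : Type*} [Ring R] [AddCommGroup T]
    [Module R T] [IsArtinian R T] [Nonempty κ] (s : κ → AffineSubspace R T)
    (hne : ∀ k, (s k : Set T).Nonempty) (hs : Directed (· ≥ ·) s) :
    ∃ t, ∀ k, t ∈ s k := by
  obtain ⟨_, ⟨k₀, rfl⟩, hk₀⟩ :=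
    wellFounded_lt.has_min (Set.range fun k => (s k).direction) (Set.range_nonempty _)
  obtain ⟨t, ht⟩ := hne k₀
  refine ⟨t, fun k => ?_⟩
  obtain ⟨j, hjk₀, hjk⟩ := hs k₀ k
  have hdir : (s j).direction = (s k₀).direction :=
    (AffineSubspace.direction_le hjk₀).eq_of_not_lt (hk₀ _ ⟨j, rfl⟩)
  rw [← AffineSubspace.eq_of_direction_eq_of_nonempty_of_le hdir (hne j) hjk₀] at ht
  exact hjk ht

section Interpolation

variable {A M T : Type*} [Ring A] [AddCommGroup M] [Module A M] [AddCommGroup T] [Module A T]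

theorem exists_linearMap_coe_eq_of_forall_finset {F : M → T}
    (hF : ∀ s : Finset M, ∃ f : M →ₗ[A] T, ∀ m ∈ s, f m = F m) :
    ∃ f : M →ₗ[A] T, ⇑f = F := by
  classical
  refine ⟨{ toFun := F, map_add' := fun m m' => ?_, map_smul' := fun a m => ?_ }, rfl⟩
  · obtain ⟨f, hf⟩ := hF {m, m', m + m'}
    simp only [Finset.mem_insert, Finset.mem_singleton, forall_eq_or_imp, forall_eq] at hf
    rw [← hf.1, ← hf.2.1, ← hf.2.2, map_add]
  · obtain ⟨f, hf⟩ := hF {m, a • m}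
    simp only [Finset.mem_insert, Finset.mem_singleton, forall_eq_or_imp, forall_eq] at hf
    rw [RingHom.id_apply, ← hf.1, ← hf.2, map_smul]

variable (A) in
def interpolants (C : Set (M × T)) : AffineSubspace (End A T) (M →ₗ[A] T) where
  carrier := {f | ∀ p ∈ C, f p.1 = p.2}
  smul_vsub_vadd_mem' c f g h hf hg hh p hp := by simp [hf p hp, hg p hp, hh p hp]

@[simp]
theorem mem_interpolants {C : Set (M × T)} {f : M →ₗ[A] T} :
    f ∈ interpolants A C ↔ ∀ p ∈ C, f p.1 = p.2 := Iff.rfl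

theorem interpolants_anti : Antitone (interpolants A : Set (M × T) → _) :=
  fun _ _ hCD _ hf p hp => hf p (hCD hp)

variable (A) in
def FinitelyInterpolable (C : Set (M × T)) : Prop :=
  ∀ Q : Finset (M × T), ↑Q ⊆ C → (interpolants A (Q : Set (M × T)) : Set (M →ₗ[A] T)).Nonempty

theorem FinitelyInterpolable.sUnion {c : Set (Set (M × T))} (hc : IsChain (· ⊆ ·) c)
    (hne : c.Nonempty) (h : ∀ P ∈ c, FinitelyInterpolable A P) :
    FinitelyInterpolable A (⋃₀ c) := fun Q hQ =>
  let ⟨P, hPc, hQP⟩ :=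
    hc.directedOn.exists_mem_subset_of_finite_of_subset_sUnion hne Q.finite_toSet hQ
  h P hPc Q hQP

theorem FinitelyInterpolable.exists_insert [IsArtinian (End A T) T]
    {P : Set (M × T)} (hP : FinitelyInterpolable A P) (m : M) :
    ∃ t, FinitelyInterpolable A (insert (m, t) P) := by
  classical
  let κ := {Q : Finset (M × T) // ↑Q ⊆ P}
  have : Nonempty κ := ⟨⟨∅, by simp⟩⟩
  -- the possible values at `m` of the maps through the finitely many points `Q`
  let s (Q : κ) : AffineSubspace (End A T) T :=
    (interpolants A (Q.1 : Set (M × T))).map (LinearMap.applyₗ' (End A T) m).toAffineMap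
  obtain ⟨t, ht⟩ := exists_forall_mem_of_directed_affineSubspace s
    (fun Q => (hP Q.1 Q.2).image _) fun Q Q' => ⟨⟨Q.1 ∪ Q'.1, by simp [Q.2, Q'.2]⟩,
      AffineSubspace.map_mono _ (interpolants_anti (by simp)),
      AffineSubspace.map_mono _ (interpolants_anti (by simp))⟩
  refine ⟨t, fun Q hQ => ?_⟩
  obtain ⟨f, hf, hft⟩ := ht ⟨Q.erase (m, t), by simpa using hQ⟩
  refine ⟨f, fun p hp => ?_⟩
  obtain rfl | hpm := eq_or_ne p (m, t)
  · exact hft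
  · exact hf p (Finset.mem_erase.mpr ⟨hpm, hp⟩)

/-- A module that is Artinian over its endomorphism ring is algebraically compact. -/
theorem FinitelyInterpolable.nonempty_interpolants [IsArtinian (End A T) T]
    {C : Set (M × T)} (hC : FinitelyInterpolable A C) :
    (interpolants A C : Set (M →ₗ[A] T)).Nonempty := by
  classical
  obtain ⟨P, hCP, hP⟩ := zorn_subset_nonempty {P | FinitelyInterpolable A P}
    (fun c hc hchain hne => ⟨⋃₀ c, .sUnion hchain hne hc, fun _ => Set.subset_sUnion_of_mem⟩) C hC
  have hfun {m : M} {t t' : T} (ht : (m, t) ∈ P) (ht' : (m, t') ∈ P) : t = t' := by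
    obtain ⟨f, hf⟩ := hP.prop {(m, t), (m, t')} (by simp [Set.insert_subset_iff, ht, ht'])
    exact (mem_interpolants.mp hf (m, t) (by simp)).symm.trans
      (mem_interpolants.mp hf (m, t') (by simp))
  have htotal (m : M) : ∃ t, (m, t) ∈ P :=
    let ⟨t, ht⟩ := hP.prop.exists_insert m
    ⟨t, hP.mem_of_prop_insert ht⟩
  choose F hF using htotal
  obtain ⟨f, rfl⟩ := exists_linearMap_coe_eq_of_forall_finset (A := A) (F := F) fun s => by
    obtain ⟨f, hf⟩ := hP.prop (s.image fun m => (m, F m)) (by simp [Set.subset_def, hF])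
    exact ⟨f, fun m hm => hf _ (Finset.mem_image_of_mem _ hm)⟩
  exact ⟨f, fun p hp => hfun (hF p.1) (hCP hp)⟩

end Interpolation

theorem sSupIndep.insert {α : Type*} [CompleteLattice α] [IsModularLattice α] {s : Set α} {a : α}
    (hs : sSupIndep s) (ha : Disjoint a (sSup s)) : sSupIndep (insert a s) := by
  intro b hb
  obtain rfl | hba := eq_or_ne b a
  · exact ha.mono_right (sSup_le_sSup fun c hc => hc.1.resolve_left hc.2)
  · have hbs : b ∈ s := hb.resolve_left hba
    rw [Set.insert_sdiff_of_notMem _ (Set.notMem_singleton_iff.mpr hba.symm), sSup_insert,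
      sup_comm]
    exact (hs hbs).disjoint_sup_right_of_disjoint_sup_left
      (ha.symm.mono_left (sup_le (le_sSup hbs) (sSup_le_sSup Set.sdiff_subset)))

section Summands

variable {A M : Type*} [Ring A] [AddCommGroup M] [Module A M]

theorem IsCompl.map_id_add {N R : Submodule A M} (h : IsCompl N R) {g : M →ₗ[A] M}
    (hg : LinearMap.range g ≤ N) : IsCompl N (R.map (LinearMap.id + g)) := by
  constructor
  · rw [disjoint_def]
    rintro _ hzN ⟨w, hwR, rfl⟩
    have hwN : w ∈ N := by simpa using sub_mem hzN (hg ⟨w, rfl⟩)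
    simp [disjoint_def.mp h.disjoint w hwN hwR]
  · rw [codisjoint_iff, eq_top_iff']
    intro m
    obtain ⟨n, hn, r, hr, rfl⟩ := mem_sup.mp (h.sup_eq_top ▸ mem_top : m ∈ N ⊔ R)
    exact mem_sup.mpr ⟨n - g r, sub_mem hn (hg ⟨r, rfl⟩), r + g r, ⟨r, hr, rfl⟩, by abel⟩

theorem Submodule.isArtinian_end_of_exists_retraction [IsArtinian (End A M) M]
    (U : Submodule A M) (hU : ∀ u : U, ∃ p : M →ₗ[A] U, p u = u) :
    IsArtinian (End A U) U := by
  let Φ (V : Submodule (End A U) U) : Submodule (End A M) M := span (End A M) (U.subtype '' V)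
  have hΦ (V : Submodule (End A U) U) (u : U) (hu : (u : M) ∈ Φ V) : u ∈ V := by
    suffices ∀ z ∈ Φ V, ∀ p : M →ₗ[A] U, p z ∈ V by
      obtain ⟨p, hp⟩ := hU u
      simpa [hp] using this _ hu p
    intro z hz
    induction hz using Submodule.span_induction with
    | mem z hz =>
      obtain ⟨v, hv, rfl⟩ := hz
      exact fun p => V.smul_mem (p ∘ₗ U.subtype) hv
    | zero => simp
    | add z w _ _ hz hw => exact fun p => by simpa using add_mem (hz p) (hw p)
    | smul g z _ hz => exact fun p => hz (p ∘ₗ g)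
  have hmono : StrictMono Φ := (OrderEmbedding.ofMapLEIff Φ fun V V' =>
    ⟨fun h u hu => hΦ V' u (SetLike.le_def.mp h (subset_span ⟨u, hu, rfl⟩)),
      fun h => span_mono (Set.image_mono h)⟩).strictMono
  exact hmono.wellFoundedLT

theorem exists_isCompl_iSup_of_directed [IsArtinian (End A M) M] {ι : Type*} [Nonempty ι]
    (S : ι → Submodule A M) (hS : Directed (· ≤ ·) S) (x : M)
    (hSx : ∀ i, ∃ P, IsCompl (S i) P ∧ x ∈ P) :
    ∃ P, IsCompl (⨆ i, S i) P ∧ x ∈ P := by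
  classical
  set U := ⨆ i, S i
  choose P hSP hxP using hSx
  have hretract (Q : Finset U) : ∃ p : M →ₗ[A] U, (∀ u ∈ Q, p u = u) ∧ p x = 0 := by
    have hS' : Directed (· ⊆ ·) fun i => (S i : Set M) := hS.mono_comp _ fun _ _ h => h
    obtain ⟨i, hi⟩ := hS'.exists_mem_subset_of_finset_subset_biUnion
      (s := Q.map (Function.Embedding.subtype _)) (by
        rw [← coe_iSup_of_directed S hS]
        simpa [Set.subset_def] using fun _ h _ => h)
    refine ⟨inclusion (le_iSup S i) ∘ₗ (S i).projectionOnto (P i) (hSP i), fun u hu => ?_, ?_⟩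
    · have hui : (u : M) ∈ S i := hi (Finset.mem_map_of_mem _ hu)
      ext
      simp [projectionOnto_apply_of_mem_left (hSP i) hui]
    · simp [projectionOnto_apply_of_mem_right (hSP i) (hxP i)]
  have : IsArtinian (End A U) U :=
    U.isArtinian_end_of_exists_retraction fun u => (hretract {u}).imp fun _ h => h.1 u (by simp)
  obtain ⟨F, hF⟩ := FinitelyInterpolable.nonempty_interpolants
    (C := insert (x, 0) (Set.range fun u : U => ((u : M), u))) fun Q hQ => by
      obtain ⟨p, hpQ, hpx⟩ := hretract (Q.image Prod.snd)
      refine ⟨p, fun q hq => ?_⟩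
      obtain rfl | ⟨u, rfl⟩ := hQ hq
      · exact hpx
      · exact hpQ u (Finset.mem_image_of_mem _ hq)
  refine ⟨LinearMap.ker F, LinearMap.isCompl_of_proj fun u => ?_, hF _ (Set.mem_insert _ _)⟩
  exact hF _ (Set.mem_insert_of_mem _ ⟨u, rfl⟩)

end Summands

section Indecomposable

variable {A M : Type*} [Ring A] [AddCommGroup M] [Module A M]

def Submodule.IsIndecomposable (N : Submodule A M) : Prop :=
  N ≠ ⊥ ∧ ∀ Q R : Submodule A M, Disjoint Q R → Q ⊔ R = N → Q = ⊥ ∨ R = ⊥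

theorem Submodule.IsIndecomposable.not_exists_decomposition {N : Submodule A M}
    (hN : N.IsIndecomposable) :
    ¬ ∃ p q : Submodule A N, p ≠ ⊥ ∧ q ≠ ⊥ ∧ p ⊓ q = ⊥ ∧ p ⊔ q = ⊤ := by
  rintro ⟨p, q, hp, hq, hpq, hsup⟩
  have hinj := map_injective_of_injective N.injective_subtype
  refine (hN.2 _ _ (disjoint_map N.injective_subtype (disjoint_iff.mpr hpq))
    (by rw [← map_sup, hsup, map_subtype_top])).elim (fun h => hp ?_) (fun h => hq ?_)
  · exact hinj (h.trans (map_bot _).symm)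
  · exact hinj (h.trans (map_bot _).symm)

theorem exists_mem_forall_mem_span_singleton [IsArtinian (End A M) M] {S C : Submodule A M}
    (hSC : IsCompl S C) (hC : C ≠ ⊥) :
    ∃ x ∈ C, x ≠ 0 ∧ ∀ r ∈ span (End A M) {x}, r ∉ S → x ∈ span (End A M) {r} := by
  obtain ⟨c, hc, hc0⟩ := (Submodule.ne_bot_iff C).mp hC
  obtain ⟨_, ⟨y, hyS, rfl⟩, hmin⟩ := wellFounded_lt.has_min
    ((fun y => span (End A M) {y}) '' {y | y ∉ S})
    ⟨_, c, fun hcS => hc0 (disjoint_def.mp hSC.disjoint c hcS hc), rfl⟩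
  set x := C.projection S hSC.symm y
  have hxy : x ∈ span (End A M) {y} := mem_span_singleton.mpr ⟨C.projection S hSC.symm, rfl⟩
  refine ⟨x, projection_apply_mem _ _, fun h => hyS ((projection_apply_eq_zero_iff _).mp h),
    fun r hr hrS => ?_⟩
  have hry : span (End A M) {r} ≤ span (End A M) {y} :=
    (span_singleton_le_iff_mem _ _).mpr ((span_singleton_le_iff_mem _ _).mpr hxy hr)
  rw [hry.eq_of_not_lt (hmin _ ⟨r, hrS, rfl⟩)]
  exact hxy

theorem isIndecomposable_of_maximal {K P : Submodule A M} {x : M} (hKP : IsCompl K P)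
    (hxP : x ∈ P) (hx : x ≠ 0)
    (hgen : ∀ r ∈ span (End A M) {x}, r ∉ K → x ∈ span (End A M) {r})
    (hmax : ∀ K' P', K ≤ K' → IsCompl K' P' → x ∈ P' → K' ≤ K) : P.IsIndecomposable := by
  refine ⟨(Submodule.ne_bot_iff P).mpr ⟨x, hxP, hx⟩, fun Q R hQR hQRP => ?_⟩
  have hsmall (N : Submodule A M) (hNP : N ≤ P) (P' : Submodule A M)
      (hNP' : IsCompl (N ⊔ K) P') (hxP' : x ∈ P') : N = ⊥ :=
    disjoint_self.mp
      (hKP.disjoint.symm.mono hNP (le_sup_left.trans (hmax _ P' le_sup_right hNP' hxP')))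
  have hQ : IsCompl Q (R ⊔ K) :=
    hQR.isCompl_sup_right_of_isCompl_sup_left (by rw [hQRP]; exact hKP.symm)
  have hR : IsCompl R (Q ⊔ K) :=
    hQR.symm.isCompl_sup_right_of_isCompl_sup_left (by rw [sup_comm, hQRP]; exact hKP.symm)
  obtain ⟨q, hq, r, hr, rfl⟩ := mem_sup.mp (hQRP ▸ hxP)
  by_cases hr0 : r = 0
  · exact .inr (hsmall R (hQRP ▸ le_sup_right) Q hQ.symm (by simpa [hr0]))
  have hrx : r ∈ span (End A M) {q + r} := mem_span_singleton.mpr ⟨R.projection (Q ⊔ K) hR, by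
    simp [projection_apply_of_mem_left hR hr,
      projection_apply_of_mem_right hR (mem_sup_left hq : q ∈ Q ⊔ K)]⟩
  have hrK : r ∉ K := fun h => hr0 (disjoint_def.mp hKP.disjoint r h (hQRP ▸ mem_sup_right hr))
  obtain ⟨g, hg⟩ := mem_span_singleton.mp (hgen r hrx hrK)
  refine .inl (hsmall Q (hQRP ▸ le_sup_left) _
    (hR.symm.map_id_add (g := Q.projection (R ⊔ K) hQ ∘ₗ g) ?_) ⟨r, hr, ?_⟩)
  · exact (LinearMap.range_comp_le_range _ _).trans (by simp)
  · have hg' : g r = q + r := hg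
    simp [hg', projection_apply_of_mem_left hQ hq,
      projection_apply_of_mem_right hQ (mem_sup_left hr : r ∈ R ⊔ K), add_comm]

theorem exists_isCompl_isIndecomposable [IsArtinian (End A M) M] {S C : Submodule A M}
    (hSC : IsCompl S C) (hC : C ≠ ⊥) :
    ∃ K D : Submodule A M, S ≤ K ∧ IsCompl K D ∧ D.IsIndecomposable := by
  obtain ⟨x, hxC, hx0, hgen⟩ := exists_mem_forall_mem_span_singleton hSC hC
  obtain ⟨K, -, hK⟩ := zorn_le_nonempty₀ {K | S ≤ K ∧ ∃ P, IsCompl K P ∧ x ∈ P}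
    (fun c hc hchain K hK => by
      replace hc : ∀ K ∈ c, S ≤ K ∧ ∃ P, IsCompl K P ∧ x ∈ P := hc
      have : Nonempty c := ⟨⟨K, hK⟩⟩
      have hle (K : c) : K.1 ≤ ⨆ K : c, K.1 := le_iSup (fun K : c => K.1) K
      obtain ⟨P, hP, hxP⟩ := exists_isCompl_iSup_of_directed (fun K : c => K.1)
        hchain.directed x fun K => (hc K K.2).2
      exact ⟨⨆ K : c, K.1, ⟨(hc K hK).1.trans (hle ⟨K, hK⟩), P, hP, hxP⟩,
        fun K hK => hle ⟨K, hK⟩⟩)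
    S ⟨le_rfl, C, hSC, hxC⟩
  obtain ⟨hSK, P, hKP, hxP⟩ := hK.prop
  exact ⟨K, P, hSK, hKP, isIndecomposable_of_maximal hKP hxP hx0
    (fun r hr hrK => hgen r hr fun hrS => hrK (hSK hrS))
    fun K' P' hKK' hK'P' hxP' => hK.le_of_ge ⟨hSK.trans hKK', P', hK'P', hxP'⟩ hKK'⟩

theorem exists_sSupIndep_isIndecomposable_sSup_eq_top [IsArtinian (End A M) M] :
    ∃ F : Set (Submodule A M), sSupIndep F ∧ (∀ N ∈ F, N.IsIndecomposable) ∧ sSup F = ⊤ := by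
  obtain ⟨F, -, hF⟩ := zorn_subset_nonempty {F : Set (Submodule A M) |
      sSupIndep F ∧ (∀ N ∈ F, N.IsIndecomposable) ∧ ∃ C, IsCompl (sSup F) C}
    (fun c hc hchain hne => by
      have : Nonempty c := hne.to_subtype
      obtain ⟨C, hC, -⟩ := exists_isCompl_iSup_of_directed (fun F : c => sSup F.1)
        (hchain.directed.mono_comp _ fun _ _ => sSup_le_sSup) 0
        fun F => (hc F.2).2.2.imp fun _ h => ⟨h, zero_mem _⟩
      refine ⟨⋃₀ c, ⟨iSupIndep_sUnion_of_directed hchain.directedOn fun F hF => (hc hF).1,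
        fun N ⟨F, hF, hN⟩ => (hc hF).2.1 N hN, C, ?_⟩, fun _ => Set.subset_sUnion_of_mem⟩
      rwa [sSup_sUnion, ← iSup_subtype''])
    ∅ ⟨sSupIndep_empty, by simp, ⊤, by simpa using isCompl_bot_top⟩
  obtain ⟨hind, hindec, C, hFC⟩ := hF.prop
  refine ⟨F, hind, hindec, ?_⟩
  by_contra htop
  obtain ⟨K, D, hFK, hKD, hD⟩ := exists_isCompl_isIndecomposable hFC
    fun hC => htop (by simpa [hC] using hFC.sup_eq_top)
  have hFD : Disjoint (sSup F) D := hKD.disjoint.mono_left hFK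
  have hcompl : IsCompl (sSup F ⊔ D) (C ⊓ K) := by
    have : IsCompl (C ⊓ K ⊔ sSup F) D := by
      rwa [sup_comm, ← sup_inf_assoc_of_le C hFK, hFC.sup_eq_top, top_inf_eq]
    exact (Disjoint.isCompl_sup_right_of_isCompl_sup_left
      (hFC.disjoint.symm.mono_left inf_le_left) this).symm
  have hDF : D ∈ F := hF.mem_of_prop_insert ⟨hind.insert hFD.symm,
    Set.forall_mem_insert.mpr ⟨hD, hindec⟩, C ⊓ K, by rwa [sSup_insert, sup_comm]⟩
  exact hD.1 (disjoint_self.mp (hFD.mono_left (le_sSup hDF)))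

end Indecomposable

/-- Any endofinite `A`-module `M` is the internal direct sum (an independent family of
submodules whose supremum is all of `M`) of a family of nonzero indecomposable
submodules. -/
theorem stmt11 (A : Type) [Ring A] (M : Type) [AddCommGroup M] [Module A M]
    (hM : IsEndofinite A M) :
    ∃ (ι : Type) (Mi : ι → Submodule A M),
      iSupIndep Mi ∧ (⨆ i, Mi i) = ⊤ ∧
      ∀ i, Mi i ≠ ⊥ ∧
        ¬ ∃ p q : Submodule A (Mi i), p ≠ ⊥ ∧ q ≠ ⊥ ∧ p ⊓ q = ⊥ ∧ p ⊔ q = ⊤ := by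
  have : IsArtinian (End A M) M := (isFiniteLength_iff_isNoetherian_isArtinian.mp hM).2
  obtain ⟨F, hind, hindec, htop⟩ :=
    exists_sSupIndep_isIndecomposable_sSup_eq_top (A := A) (M := M)
  exact ⟨F, Subtype.val, (sSupIndep_iff F).mp hind, by rwa [← sSup_eq_iSup'],
    fun N => ⟨(hindec N N.2).1, (hindec N N.2).not_exists_decomposition⟩⟩
end

section
/- Let A be a ring and M an endofinite A-module. Then for every index set ι, both the direct product ∏_{i ∈ ι} M (the A-module of functions ι → M with pointwise action) and the direct sum ⊕_{i ∈ ι} M are endofinite A-modules. -/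
open Module

section OrderEmbedding

variable {R S M N : Type*} [Ring R] [Ring S] [AddCommGroup M] [Module R M]
  [AddCommGroup N] [Module S N]

theorem IsFiniteLength.of_orderEmbedding (e : Submodule S N ↪o Submodule R M)
    (h : IsFiniteLength R M) : IsFiniteLength S N := by
  obtain ⟨hNoeth, hArt⟩ := isFiniteLength_iff_isNoetherian_isArtinian.mp h
  rw [isNoetherian_iff'] at hNoeth
  exact isFiniteLength_iff_isNoetherian_isArtinian.mpr
    ⟨isNoetherian_iff'.mpr e.wellFoundedGT, e.wellFoundedLT⟩

theorem IsFiniteLength.of_mem_iff_forall_mem {ι : Type*} {W : Submodule S N → Submodule R M}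
    (hW : Monotone W) (c : N → ι → M) (hc : ∀ U x, x ∈ U ↔ ∀ j, c x j ∈ W U)
    (h : IsFiniteLength R M) : IsFiniteLength S N :=
  h.of_orderEmbedding <| OrderEmbedding.ofMapLEIff W fun U V =>
    ⟨fun hUV x hx => (hc V x).2 fun j => hUV ((hc U x).1 hx j), fun hUV => hW hUV⟩

end OrderEmbedding

variable {A M : Type*} [Ring A] [AddCommGroup M] [Module A M] (ι : Type*)

section Pi

def constSubmodule (U : Submodule (End A (ι → M)) (ι → M)) : Submodule (End A M) M where
  carrier := {m | Function.const ι m ∈ U}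
  zero_mem' := U.zero_mem
  add_mem' ha hb := U.add_mem ha hb
  smul_mem' f _ hm := U.smul_mem (LinearMap.piMap fun _ => f) hm

theorem constSubmodule_mono : Monotone (constSubmodule (A := A) (M := M) ι) :=
  fun _ _ hUV _ hm => hUV hm

theorem mem_iff_forall_apply_mem_constSubmodule [IsNoetherian (End A M) M]
    (U : Submodule (End A (ι → M)) (ι → M)) (x : ι → M) :
    x ∈ U ↔ ∀ j, x j ∈ constSubmodule ι U := by
  refine ⟨fun hx j => U.smul_mem (LinearMap.pi fun _ => LinearMap.proj j) hx, fun hx => ?_⟩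
  obtain ⟨s, hs⟩ := IsNoetherian.noetherian (constSubmodule ι U)
  have hcoeff : ∀ j, ∃ c : M → End A M, ∑ w ∈ s, c w • w = x j := fun j => by
    obtain ⟨c, -, hc⟩ := Submodule.mem_span_finset.mp (hs ▸ hx j)
    exact ⟨c, hc⟩
  choose c hc using hcoeff
  have hx_eq : x = ∑ w ∈ s, (LinearMap.piMap fun j => c j w) • Function.const ι w := by
    ext j
    simp [← hc j, Module.End.smul_def]
  rw [hx_eq]
  exact U.sum_mem fun w hw => U.smul_mem _ (hs ▸ Submodule.subset_span hw : w ∈ _)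

end Pi

section Finsupp

def singleSubmodule (U : Submodule (End A (ι →₀ M)) (ι →₀ M)) : Submodule (End A M) M where
  carrier := {m | ∀ j, Finsupp.single j m ∈ U}
  zero_mem' j := by rw [Finsupp.single_zero]; exact U.zero_mem
  add_mem' ha hb j := by rw [Finsupp.single_add]; exact U.add_mem (ha j) (hb j)
  smul_mem' f m hm j := by
    simpa [Module.End.smul_def] using U.smul_mem (Finsupp.mapRange.linearMap f) (hm j)

theorem singleSubmodule_mono : Monotone (singleSubmodule (A := A) (M := M) ι) :=
  fun _ _ hUV _ hm j => hUV (hm j)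

theorem mem_iff_forall_apply_mem_singleSubmodule (U : Submodule (End A (ι →₀ M)) (ι →₀ M))
    (x : ι →₀ M) : x ∈ U ↔ ∀ j, x j ∈ singleSubmodule ι U := by
  refine ⟨fun hx j k => ?_, fun hx => ?_⟩
  · simpa [Module.End.smul_def] using
      U.smul_mem ((Finsupp.lsingle k).comp (Finsupp.lapply j)) hx
  · rw [← Finsupp.sum_single x]
    exact U.finsuppSum_mem _ _ _ fun j _ => hx j j

end Finsupp

/-- For an endofinite `A`-module `M` and any index set `ι`, both the direct product
`∏_{i ∈ ι} M = (ι → M)` and the direct sum `⊕_{i ∈ ι} M = (ι →₀ M)` are endofinite. -/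
theorem stmt12 (A : Type) [Ring A] (M : Type) [AddCommGroup M] [Module A M]
    (hM : IsEndofinite A M) (ι : Type) :
    IsEndofinite A (ι → M) ∧ IsEndofinite A (ι →₀ M) := by
  have : IsNoetherian (End A M) M := (isFiniteLength_iff_isNoetherian_isArtinian.mp hM).1
  exact ⟨hM.of_mem_iff_forall_mem (constSubmodule_mono ι) id
      (mem_iff_forall_apply_mem_constSubmodule ι),
    hM.of_mem_iff_forall_mem (singleSubmodule_mono ι) (⇑)
      (mem_iff_forall_apply_mem_singleSubmodule ι)⟩
end

section
/- Let A be a ring. If M and N are endofinite A-modules, then M ⊕ N is an endofinite A-module; and any direct summand of an endofinite A-module is endofinite. -/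
lemma IsFiniteLength.of_strictMono {R M β : Type*} [Ring R] [AddCommGroup M] [Module R M]
    [PartialOrder β] [WellFoundedLT β] [WellFoundedGT β]
    {φ : Submodule R M → β} (hφ : StrictMono φ) : IsFiniteLength R M :=
  isFiniteLength_iff_isNoetherian_isArtinian.mpr
    ⟨isNoetherian_mk hφ.wellFoundedGT, hφ.wellFoundedLT⟩

lemma IsFiniteLength.wellFoundedLT {R M : Type*} [Ring R] [AddCommGroup M] [Module R M]
    (h : IsFiniteLength R M) : WellFoundedLT (Submodule R M) :=
  have := (isFiniteLength_iff_isNoetherian_isArtinian.mp h).2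
  inferInstance

lemma IsFiniteLength.wellFoundedGT {R M : Type*} [Ring R] [AddCommGroup M] [Module R M]
    (h : IsFiniteLength R M) : WellFoundedGT (Submodule R M) :=
  have := (isFiniteLength_iff_isNoetherian_isArtinian.mp h).1
  inferInstance

namespace Submodule

open Module

variable {A M N : Type*} [Ring A] [AddCommGroup M] [Module A M] [AddCommGroup N] [Module A N]

def endComapOfRetract (f : N →ₗ[A] M) {g : M →ₗ[A] N} (hgf : g ∘ₗ f = LinearMap.id)
    (U : Submodule (End A M) M) : Submodule (End A N) N where
  carrier := f ⁻¹' U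
  add_mem' {x y} hx hy := by simpa using U.add_mem hx hy
  zero_mem' := by simp
  smul_mem' s n hn := by
    have h : f (s n) = (f ∘ₗ s ∘ₗ g) • f n := by
      simp [End.smul_def, ← LinearMap.comp_apply g f, hgf]
    change f (s n) ∈ U
    rw [h]
    exact U.smul_mem _ hn

@[simp]
lemma mem_endComapOfRetract (f : N →ₗ[A] M) {g : M →ₗ[A] N} (hgf : g ∘ₗ f = LinearMap.id)
    (U : Submodule (End A M) M) (n : N) : n ∈ endComapOfRetract f hgf U ↔ f n ∈ U :=
  Iff.rfl

lemma endComapOfRetract_mono (f : N →ₗ[A] M) {g : M →ₗ[A] N} (hgf : g ∘ₗ f = LinearMap.id) :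
    Monotone (endComapOfRetract f hgf) :=
  fun _ _ hUV _ hn => hUV hn

def endCore (g : M →ₗ[A] N) (P : Submodule (End A N) N) : Submodule (End A M) M where
  carrier := {x | ∀ s : End A M, g (s x) ∈ P}
  add_mem' {x y} hx hy s := by simpa using P.add_mem (hx s) (hy s)
  zero_mem' s := by simp
  smul_mem' t x hx s := hx (s * t)

lemma endCore_mono (g : M →ₗ[A] N) : Monotone (endCore g) :=
  fun _ _ hPQ _ hx s => hPQ (hx s)

lemma endComapOfRetract_endCore (f : N →ₗ[A] M) {g : M →ₗ[A] N} (hgf : g ∘ₗ f = LinearMap.id)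
    (P : Submodule (End A N) N) : endComapOfRetract f hgf (endCore g P) = P := by
  ext n
  refine ⟨fun hn => ?_, fun hn s => P.smul_mem (g ∘ₗ s ∘ₗ f) hn⟩
  simpa [← LinearMap.comp_apply g f, hgf] using hn 1

lemma endCore_strictMono (f : N →ₗ[A] M) {g : M →ₗ[A] N} (hgf : g ∘ₗ f = LinearMap.id) :
    StrictMono (endCore (M := M) g) :=
  (endCore_mono g).strictMono_of_injective
    (Function.LeftInverse.injective (endComapOfRetract_endCore f hgf))

lemma mem_iff_inl_mem_and_inr_mem (U : Submodule (End A (M × N)) (M × N)) (m : M) (n : N) :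
    (m, n) ∈ U ↔ (m, 0) ∈ U ∧ (0, n) ∈ U := by
  refine ⟨fun h => ⟨?_, ?_⟩, fun ⟨hm, hn⟩ => by simpa using U.add_mem hm hn⟩
  · simpa [End.smul_def] using U.smul_mem (LinearMap.inl A M N ∘ₗ LinearMap.fst A M N) h
  · simpa [End.smul_def] using U.smul_mem (LinearMap.inr A M N ∘ₗ LinearMap.snd A M N) h

end Submodule

open Submodule

variable {A M N : Type*} [Ring A] [AddCommGroup M] [Module A M] [AddCommGroup N] [Module A N]

lemma IsEndofinite.of_retract (f : N →ₗ[A] M) (g : M →ₗ[A] N) (hgf : g ∘ₗ f = LinearMap.id)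
    (hM : IsEndofinite A M) : IsEndofinite A N :=
  have := hM.wellFoundedLT
  have := hM.wellFoundedGT
  IsFiniteLength.of_strictMono (endCore_strictMono f hgf)

lemma IsEndofinite.prod (hM : IsEndofinite A M) (hN : IsEndofinite A N) :
    IsEndofinite A (M × N) := by
  have := hM.wellFoundedLT
  have := hM.wellFoundedGT
  have := hN.wellFoundedLT
  have := hN.wellFoundedGT
  let φ (U : Submodule (Module.End A (M × N)) (M × N)) :=
    (endComapOfRetract _ (LinearMap.fst_comp_inl A M N) U,
      endComapOfRetract _ (LinearMap.snd_comp_inr A M N) U)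
  have hφ_mono : Monotone φ := fun _ _ hUV =>
    ⟨endComapOfRetract_mono _ (LinearMap.fst_comp_inl A M N) hUV,
      endComapOfRetract_mono _ (LinearMap.snd_comp_inr A M N) hUV⟩
  have hφ_inj : Function.Injective φ := by
    intro U V hUV
    simp only [φ, Prod.mk.injEq, SetLike.ext_iff, mem_endComapOfRetract, LinearMap.inl_apply,
      LinearMap.inr_apply] at hUV
    ext ⟨m, n⟩
    exact (mem_iff_inl_mem_and_inr_mem U m n).trans
      ((and_congr (hUV.1 m) (hUV.2 n)).trans (mem_iff_inl_mem_and_inr_mem V m n).symm)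
  unfold IsEndofinite
  exact IsFiniteLength.of_strictMono (hφ_mono.strictMono_of_injective hφ_inj)

/-- The class of endofinite `A`-modules is closed under finite direct sums and under
direct summands (a summand being exhibited by a split monomorphism). -/
theorem stmt13 (A : Type) [Ring A] :
    (∀ (M N : Type) [AddCommGroup M] [Module A M] [AddCommGroup N] [Module A N],
      IsEndofinite A M → IsEndofinite A N → IsEndofinite A (M × N)) ∧
    (∀ (M N : Type) [AddCommGroup M] [Module A M] [AddCommGroup N] [Module A N]
      (f : N →ₗ[A] M) (g : M →ₗ[A] N), IsEndofinite A M → g.comp f = LinearMap.id →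
      IsEndofinite A N) :=
  ⟨fun _ _ _ _ _ _ hM hN => hM.prod hN,
    fun _ _ _ _ _ _ f g hM hgf => hM.of_retract f g hgf⟩
end

section
/- Let k ⊆ K be an extension of fields, G a group, H a subgroup of G, and (M, σ) a k-linear representation of G. Write KG := MonoidAlgebra K G and KH := MonoidAlgebra K H. Let F := KG ⊗_{KH} K be the K-linear representation of G coinduced from the trivial one-dimensional representation K of H (G acting by left multiplication on the first tensor factor), regarded as a k-linear representation of G by restriction of scalars. Regard Hom_k(K, M) as a K-vector space via (c • f)(x) = f(x·c) and as a representation of G via g·f = σ(g) ∘ f. Then there is a k-linear G-equivariant isomorphism Hom_{KH}(KG, Hom_k(K, M)) ≅ Hom_k(F, M), where on the left-hand side Hom_{KH} denotes the left KH-linear maps (KH acting on KG by left multiplication), with G-action (g·F')(a) = F'(a·g), and on the right-hand side G acts by conjugation, (g·f)(x) = σ(g) f(g⁻¹ · x). Moreover, if K is finite-dimensional over k and H has finite index in G, then F is finite-dimensional over k, of k-dimension [K : k]·[G : H]. -/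
open TensorProduct

variable (k K : Type*) [Field k] [Field K] [Algebra k K]
variable (G : Type*) [Group G] (H : Subgroup G)

/-- The relations defining `KG ⊗_{KH} W` (for a representation `μ` of `H` on `W`) as a
quotient of `KG ⊗_K W`. -/
noncomputable def indRel (W : Type*) [AddCommGroup W] [Module K W] (μ : Representation K H W) :
    Submodule (MonoidAlgebra K G) (MonoidAlgebra K G ⊗[K] W) :=
  Submodule.span (MonoidAlgebra K G)
    {z | ∃ (a : MonoidAlgebra K G) (h : H) (w : W),
      z = (a * MonoidAlgebra.of K G (h : G)) ⊗ₜ[K] w - a ⊗ₜ[K] (μ h w)}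

/-- The coinduced module `KG ⊗_{KH} W`, realized as the quotient of `KG ⊗_K W` by the
`KH`-balancing relations; `G` acts through left multiplication on the left factor. -/
abbrev Ind (W : Type*) [AddCommGroup W] [Module K W] (μ : Representation K H W) :=
  (MonoidAlgebra K G ⊗[K] W) ⧸ indRel K G H W μ

/-- `F = KG ⊗_{KH} K`, the representation of `G` coinduced from the trivial
one-dimensional representation of `H` over `K`. -/
abbrev coindTrivial := Ind K G H K (Representation.trivial K (G := H) (V := K))

variable (M : Type*) [AddCommGroup M] [Module k M]

/-- `Hom_{KH}(KG, Hom_k(K, M))`: the `k`-subspace of `Hom_k(KG, Hom_k(K, M))` of left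
`KH`-linear maps, where `Hom_k(K, M)` carries the `K`-structure `(c • f)(x) = f (x * c)`
and the `H`-action `h • f = σ h ∘ f`. -/
def homSub (σ : Representation k G M) :
    Submodule k (MonoidAlgebra K G →ₗ[k] (K →ₗ[k] M)) where
  carrier := {F | (∀ (c : K) (a : MonoidAlgebra K G) (x : K), F (c • a) x = F a (x * c)) ∧
    ∀ (h : H) (a : MonoidAlgebra K G) (x : K),
      F (MonoidAlgebra.of K G (h : G) * a) x = σ (h : G) (F a x)}
  add_mem' := by
    rintro f g ⟨hf1, hf2⟩ ⟨hg1, hg2⟩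
    constructor
    · intro c a x
      simp only [LinearMap.add_apply, hf1 c a x, hg1 c a x]
    · intro h a x
      simp only [LinearMap.add_apply, hf2 h a x, hg2 h a x, map_add]
  zero_mem' := by constructor <;> intros <;> simp
  smul_mem' := by
    rintro t f ⟨hf1, hf2⟩
    constructor
    · intro c a x
      simp only [LinearMap.smul_apply, hf1 c a x]
    · intro h a x
      simp only [LinearMap.smul_apply, hf2 h a x, map_smul]

/-!
A left `KH`-linear map `F' : KG → Hom_k(K, M)` is determined by its values `F' u⁻¹` on group
elements, subject to `F' (h u⁻¹) = σ h ∘ F' u⁻¹`. Twisting by `σ u` turns this family into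
`u ↦ σ u ∘ F' u⁻¹`, which is invariant under `u ↦ u h` for `h ∈ H`: exactly the data of
a `k`-linear map on `KG ⊗_{KH} K`, the sum of the lines `u ⊗ K` over `u ∈ G/H`. Equivariance
is checked on these lines, and the same description gives `KG ⊗_{KH} K ≅ K[G/H]` over `k`.
-/

open MonoidAlgebra TensorProduct

theorem Submodule.restrictScalars_span_le_ker {R A N P : Type*} [Semiring R] [Semiring A] [SMul R A]
    [AddCommMonoid N] [Module A N] [Module R N] [IsScalarTower R A N] [AddCommMonoid P]
    [Module R P] {s : Set N} (f : N →ₗ[R] P)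
    (hf : ∀ a : A, ∀ x ∈ s, f (a • x) = 0) :
    (span A s).restrictScalars R ≤ LinearMap.ker f := by
  intro x hx
  suffices ∀ a : A, f (a • x) = 0 by simpa using this 1
  induction hx using Submodule.span_induction with
  | mem x hx => exact fun a => hf a x hx
  | zero => simp
  | add x y _ _ hx hy => intro a; rw [smul_add, map_add, hx, hy, add_zero]
  | smul b x _ hx => intro a; rw [smul_smul]; exact hx (a * b)

noncomputable def Submodule.liftQRestrictScalars {R A N P : Type*} [Ring R] [Ring A] [SMul R A]
    [AddCommGroup N] [Module A N] [Module R N] [IsScalarTower R A N] [AddCommGroup P] [Module R P]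
    (p : Submodule A N) (f : N →ₗ[R] P)
    (h : p.restrictScalars R ≤ LinearMap.ker f) : N ⧸ p →ₗ[R] P :=
  (p.restrictScalars R).liftQ f h ∘ₗ
    (Submodule.Quotient.restrictScalarsEquiv R p).symm.toLinearMap

theorem MonoidAlgebra.single_tmul_eq_single_one_tmul {K G W : Type*} [CommSemiring K]
    [AddCommMonoid W] [Module K W] (u : G) (c : K) (w : W) :
    (single u c ⊗ₜ[K] w : MonoidAlgebra K G ⊗[K] W) = single u 1 ⊗ₜ (c • w) := by
  rw [← smul_tmul, smul_single, smul_eq_mul, mul_one]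

namespace coindTrivial

variable {K G H}

noncomputable def ι (u : G) : K →ₗ[k] coindTrivial K G H :=
  ((indRel K G H K (Representation.trivial K H K)).mkQ.restrictScalars k) ∘ₗ
    (TensorProduct.mk K (MonoidAlgebra K G) K (single u 1)).restrictScalars k

theorem ι_apply (u : G) (w : K) :
    (ι k u w : coindTrivial K G H) = Submodule.Quotient.mk (single u 1 ⊗ₜ w) := rfl

theorem mk_single_tmul (u : G) (c w : K) :
    (Submodule.Quotient.mk (single u c ⊗ₜ[K] w) : coindTrivial K G H) = ι k u (c * w) := by
  rw [single_tmul_eq_single_one_tmul, ι_apply, smul_eq_mul]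

theorem ι_mul_of_mem (u : G) {h : G} (hh : h ∈ H) :
    (ι k (u * h) : K →ₗ[k] coindTrivial K G H) = ι k u := by
  ext w
  rw [ι_apply, ι_apply, Submodule.Quotient.eq]
  refine Submodule.subset_span ⟨single u 1, ⟨h, hh⟩, w, ?_⟩
  rw [of_apply, single_mul_single, mul_one, Representation.trivial_apply]

theorem of_smul_ι (g u : G) (w : K) :
    of K G g • (ι k u w : coindTrivial K G H) = ι k (g * u) w := by
  rw [ι_apply, ← Submodule.Quotient.mk_smul, smul_tmul', smul_eq_mul, of_apply,
    single_mul_single, one_mul, ι_apply]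

@[elab_as_elim]
theorem induction_on {p : coindTrivial K G H → Prop} (x : coindTrivial K G H)
    (hι : ∀ u w, p (ι k u w)) (hadd : ∀ x y, p x → p y → p (x + y)) : p x := by
  obtain ⟨y, rfl⟩ := Submodule.Quotient.mk_surjective _ x
  induction y using TensorProduct.induction_on with
  | zero => simpa using hι 1 0
  | add y z hy hz => exact hadd _ _ hy hz
  | tmul a w =>
    induction a using MonoidAlgebra.induction_linear with
    | zero => simpa using hι 1 0
    | add a b ha hb => rw [add_tmul, Submodule.Quotient.mk_add]; exact hadd _ _ ha hb
    | single u c => rw [mk_single_tmul k]; exact hι u _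

theorem hom_ext {N : Type*} [AddCommGroup N] [Module k N] {φ ψ : coindTrivial K G H →ₗ[k] N}
    (h : ∀ u w, φ (ι k u w) = ψ (ι k u w)) : φ = ψ := by
  refine LinearMap.ext fun x => induction_on k (p := fun x => φ x = ψ x) x h ?_
  intro x y hx hy
  rw [map_add, map_add, hx, hy]

variable {N : Type*} [AddCommGroup N] [Module k N]

theorem apply_mul_of_tmul (f : MonoidAlgebra K G ⊗[K] K →ₗ[k] N)
    (hf : ∀ (u : G) (h : H) (w : K), f (single (u * h) 1 ⊗ₜ w) = f (single u 1 ⊗ₜ w))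
    (a : MonoidAlgebra K G) (h : H) (w : K) : f ((a * of K G h) ⊗ₜ w) = f (a ⊗ₜ w) := by
  induction a using MonoidAlgebra.induction_linear with
  | zero => simp
  | add a b ha hb => rw [add_mul, add_tmul, add_tmul, map_add, map_add, ha, hb]
  | single u c =>
    rw [of_apply, single_mul_single, mul_one, single_tmul_eq_single_one_tmul (u * h), hf,
      ← single_tmul_eq_single_one_tmul]

noncomputable def lift (f : MonoidAlgebra K G ⊗[K] K →ₗ[k] N)
    (hf : ∀ (u : G) (h : H) (w : K), f (single (u * h) 1 ⊗ₜ w) = f (single u 1 ⊗ₜ w)) :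
    coindTrivial K G H →ₗ[k] N :=
  Submodule.liftQRestrictScalars _ f <| Submodule.restrictScalars_span_le_ker f <| by
    rintro a _ ⟨b, h, w, rfl⟩
    rw [Representation.trivial_apply, smul_sub, smul_tmul', smul_tmul', smul_eq_mul, smul_eq_mul,
      ← mul_assoc, map_sub, apply_mul_of_tmul k f hf, sub_self]

@[simp]
theorem lift_ι (f : MonoidAlgebra K G ⊗[K] K →ₗ[k] N)
    (hf : ∀ (u : G) (h : H) (w : K), f (single (u * h) 1 ⊗ₜ w) = f (single u 1 ⊗ₜ w))
    (u : G) (w : K) : lift k f hf (ι k u w) = f (single u 1 ⊗ₜ w) :=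
  rfl

end coindTrivial

section homSub

variable {k K G H M} {σ : Representation k G M} {F : MonoidAlgebra K G →ₗ[k] (K →ₗ[k] M)}

theorem homSub.apply_single (hF : F ∈ homSub k K G H M σ) (v : G) (c x : K) :
    F (single v c) x = F (single v 1) (x * c) := by
  rw [← hF.1, smul_single, smul_eq_mul, mul_one]

theorem homSub.apply_single_mul_left (hF : F ∈ homSub k K G H M σ) (h : H) (v : G) (c x : K) :
    F (single (h * v) c) x = σ h (F (single v c) x) := by
  rw [← hF.2, of_apply, single_mul_single, one_mul]

theorem comp_mulRight_mem_homSub (g : G) (hF : F ∈ homSub k K G H M σ) :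
    F ∘ₗ (LinearMap.mulRight K (of K G g)).restrictScalars k ∈ homSub k K G H M σ := by
  refine ⟨fun c a x => ?_, fun h a x => ?_⟩
  · simpa only [LinearMap.comp_apply, LinearMap.coe_restrictScalars, LinearMap.mulRight_apply,
      smul_mul_assoc] using hF.1 c (a * of K G g) x
  · simpa only [LinearMap.comp_apply, LinearMap.coe_restrictScalars, LinearMap.mulRight_apply,
      mul_assoc] using hF.2 h (a * of K G g) x

variable (σ)

noncomputable def twistTensor (F : MonoidAlgebra K G →ₗ[k] (K →ₗ[k] M)) :
    MonoidAlgebra K G ⊗[K] K →ₗ[k] M :=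
  Finsupp.lsum k (fun u => σ u ∘ₗ F (single u⁻¹ 1)) ∘ₗ
    (coeffLinearEquiv k).toLinearMap ∘ₗ
    (TensorProduct.rid K (MonoidAlgebra K G)).toLinearMap.restrictScalars k

theorem twistTensor_single_one_tmul (u : G) (w : K) :
    twistTensor σ F (single u 1 ⊗ₜ w) = σ u (F (single u⁻¹ 1) w) := by
  simp [twistTensor]

noncomputable def homSubToHom : homSub k K G H M σ →ₗ[k] (coindTrivial K G H →ₗ[k] M) where
  toFun F := coindTrivial.lift k (twistTensor σ F) fun u h w => by
    rw [twistTensor_single_one_tmul, twistTensor_single_one_tmul, mul_inv_rev,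
      ← Subgroup.coe_inv, homSub.apply_single_mul_left F.2, Subgroup.coe_inv, map_mul,
      Module.End.mul_apply, Representation.self_inv_apply]
  map_add' F F' := coindTrivial.hom_ext k fun u w => by
    simp [twistTensor_single_one_tmul]
  map_smul' t F := coindTrivial.hom_ext k fun u w => by
    simp [twistTensor_single_one_tmul]

theorem homSubToHom_ι (F : homSub k K G H M σ) (u : G) (w : K) :
    homSubToHom σ F (coindTrivial.ι k u w) = σ u (F.1 (single u⁻¹ 1) w) :=
  twistTensor_single_one_tmul σ u w

noncomputable def untwist (φ : coindTrivial K G H →ₗ[k] M) :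
    MonoidAlgebra K G →ₗ[k] (K →ₗ[k] M) :=
  Finsupp.lsum k
      (fun v => LinearMap.llcomp k K K M (σ v ∘ₗ φ ∘ₗ coindTrivial.ι k v⁻¹) ∘ₗ LinearMap.mul k K) ∘ₗ
    (coeffLinearEquiv k).toLinearMap

theorem untwist_single (φ : coindTrivial K G H →ₗ[k] M) (v : G) (c x : K) :
    untwist σ φ (single v c) x = σ v (φ (coindTrivial.ι k v⁻¹ (c * x))) := by
  simp [untwist]

theorem untwist_mem_homSub (φ : coindTrivial K G H →ₗ[k] M) :
    untwist σ φ ∈ homSub k K G H M σ := by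
  constructor
  · intro c a x
    induction a using MonoidAlgebra.induction_linear with
    | zero => simp
    | add a b ha hb => simp only [smul_add, map_add, LinearMap.add_apply, ha, hb]
    | single v c' =>
      rw [smul_single, untwist_single, untwist_single, smul_eq_mul, mul_comm x c, mul_left_comm,
        mul_assoc]
  · intro h a x
    induction a using MonoidAlgebra.induction_linear with
    | zero => simp
    | add a b ha hb => simp only [mul_add, map_add, LinearMap.add_apply, ha, hb]
    | single v c =>
      rw [of_apply, single_mul_single, one_mul, untwist_single, untwist_single, mul_inv_rev,
        coindTrivial.ι_mul_of_mem k _ (inv_mem h.2), map_mul, Module.End.mul_apply]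

end homSub

section homSubEquiv

variable {k K G H M} (σ : Representation k G M)

theorem homSubToHom_untwist (φ : coindTrivial K G H →ₗ[k] M) :
    homSubToHom σ ⟨untwist σ φ, untwist_mem_homSub σ φ⟩ = φ :=
  coindTrivial.hom_ext k fun u w => by
    rw [homSubToHom_ι, untwist_single, inv_inv, one_mul, Representation.self_inv_apply]

theorem untwist_homSubToHom (F : homSub k K G H M σ) : untwist σ (homSubToHom σ F) = F := by
  refine LinearMap.toAddMonoidHom_injective <|
    addMonoidHom_ext fun v c => LinearMap.ext fun x => ?_
  simp only [LinearMap.toAddMonoidHom_coe, untwist_single, homSubToHom_ι, inv_inv,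
    Representation.self_inv_apply, homSub.apply_single F.2 v c, mul_comm x]

noncomputable def homSubEquiv : homSub k K G H M σ ≃ₗ[k] (coindTrivial K G H →ₗ[k] M) :=
  { homSubToHom σ with
    invFun φ := ⟨untwist σ φ, untwist_mem_homSub σ φ⟩
    left_inv F := Subtype.ext (untwist_homSubToHom σ F)
    right_inv := homSubToHom_untwist σ }

theorem homSubEquiv_apply (F : homSub k K G H M σ) : homSubEquiv σ F = homSubToHom σ F :=
  rfl

theorem homSubEquiv_comp_mulRight (g : G) (F : homSub k K G H M σ) (x : coindTrivial K G H) :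
    homSubEquiv σ ⟨F.1 ∘ₗ (LinearMap.mulRight K (of K G g)).restrictScalars k,
        comp_mulRight_mem_homSub g F.2⟩ x =
      σ g (homSubEquiv σ F (of K G g⁻¹ • x)) := by
  simp only [homSubEquiv_apply]
  refine coindTrivial.induction_on k
    (p := fun x => _ = σ g (homSubToHom σ F (of K G g⁻¹ • x))) x (fun u w => ?_)
    fun x y hx hy => by simp only [map_add, smul_add, hx, hy]
  rw [coindTrivial.of_smul_ι, homSubToHom_ι, homSubToHom_ι, ← Module.End.mul_apply, ← map_mul,
    mul_inv_cancel_left]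
  simp only [LinearMap.comp_apply, LinearMap.coe_restrictScalars, LinearMap.mulRight_apply,
    of_apply, single_mul_single, one_mul, mul_inv_rev, inv_inv]

end homSubEquiv

namespace coindTrivial

variable {K G H}

noncomputable def toCosets : coindTrivial K G H →ₗ[k] (G ⧸ H →₀ K) :=
  lift k (Finsupp.lmapDomain K k (QuotientGroup.mk : G → G ⧸ H) ∘ₗ
      (coeffLinearEquiv k).toLinearMap ∘ₗ
      (TensorProduct.rid K (MonoidAlgebra K G)).toLinearMap.restrictScalars k)
    fun u h w => by simp [QuotientGroup.mk_mul_of_mem u h.2]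

theorem toCosets_ι (u : G) (w : K) :
    toCosets k (ι k u w : coindTrivial K G H) = Finsupp.single ↑u w := by
  simp [toCosets]

noncomputable def ofCosets : (G ⧸ H →₀ K) →ₗ[k] coindTrivial K G H :=
  Finsupp.lsum k fun q => ι k q.out

noncomputable def equivCosets : coindTrivial K G H ≃ₗ[k] (G ⧸ H →₀ K) :=
  LinearEquiv.ofLinearMap (toCosets k) (ofCosets k)
    (Finsupp.lhom_ext fun q w => by simp [ofCosets, toCosets_ι])
    (hom_ext k fun u w => by
      obtain ⟨h, hh⟩ := QuotientGroup.mk_out_eq_mul H u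
      simp [ofCosets, toCosets_ι, hh, ι_mul_of_mem k u h.2])

theorem finiteDimensional [FiniteDimensional k K] [H.FiniteIndex] :
    FiniteDimensional k (coindTrivial K G H) :=
  Module.Finite.equiv (equivCosets k).symm

theorem finrank_eq [H.FiniteIndex] :
    Module.finrank k (coindTrivial K G H) = Module.finrank k K * H.index := by
  have := H.fintypeQuotientOfFiniteIndex
  rw [(equivCosets k).finrank_eq, ← Module.finrank_mul_finrank k K, Module.finrank_finsupp_self,
    Subgroup.index_eq_card, Nat.card_eq_fintype_card]

end coindTrivial

/-- Let `k ⊆ K` be fields, `H ≤ G` groups, `σ` a `k`-linear representation of `G` on `M`,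
and `F = KG ⊗_{KH} K` the `K`-representation of `G` coinduced from the trivial
representation of `H`, viewed over `k` by restriction. Then there is a `G`-equivariant
`k`-linear isomorphism `Hom_{KH}(KG, Hom_k(K, M)) ≅ Hom_k(F, M)`, where `G` acts on the
source by `(g • F')(a) = F' (a * g)` and on the target by conjugation
`(g • f)(x) = σ g (f (g⁻¹ • x))`. Moreover if `K/k` is finite and `H` has finite index
in `G`, then `F` is finite-dimensional over `k` of dimension `[K : k] · [G : H]`. -/
theorem stmt14 (σ : Representation k G M) :
    (∃ (hstab : ∀ (g : G), ∀ F ∈ homSub k K G H M σ,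
        F.comp ((LinearMap.mulRight K (MonoidAlgebra.of K G g)).restrictScalars k)
          ∈ homSub k K G H M σ)
      (Φ : homSub k K G H M σ ≃ₗ[k] (coindTrivial K G H →ₗ[k] M)),
      ∀ (g : G) (F : homSub k K G H M σ) (x : coindTrivial K G H),
        Φ ⟨(F : MonoidAlgebra K G →ₗ[k] (K →ₗ[k] M)).comp
              ((LinearMap.mulRight K (MonoidAlgebra.of K G g)).restrictScalars k),
            hstab g F F.2⟩ x
          = σ g (Φ F (MonoidAlgebra.of K G g⁻¹ • x))) ∧
    (FiniteDimensional k K → H.index ≠ 0 →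
      FiniteDimensional k (coindTrivial K G H) ∧
        Module.finrank k (coindTrivial K G H) = Module.finrank k K * H.index) := by
  refine ⟨⟨fun g _ => comp_mulRight_mem_homSub g, homSubEquiv σ,
    homSubEquiv_comp_mulRight σ⟩, fun _ hindex => ?_⟩
  have : H.FiniteIndex := ⟨hindex⟩
  exact ⟨coindTrivial.finiteDimensional k, coindTrivial.finrank_eq k⟩
end

section
/- Let k be a field of characteristic p > 0, E a finite p-group, (F, φ) a finite-dimensional k-linear representation of E, and (M, σ) an arbitrary k-linear representation of E. Give Hom_k(F, M) the conjugation E-action (g·f)(x) = σ(g) f(φ(g)⁻¹ x). Then there exists a chain of E-subrepresentations 0 = X_0 ⊆ X_1 ⊆ ⋯ ⊆ X_n = Hom_k(F, M), with n = dim_k F, such that for each i the quotient representation X_{i+1}/X_i is isomorphic to M as a representation of E. -/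
/-!
A finite `p`-group acting on a nonzero abelian group of exponent `p` fixes a nonzero element:
the subgroup generated by an orbit is finite of order divisible by `p`, so its number of fixed
points is divisible by `p` and exceeds one. Applied to dual spaces and iterated on the kernel of
a fixed linear form, this gives a basis `b` of `F` in which `φ` is lower unitriangular. The maps
`F → M` killing `b l` for all `l ≥ i` then form the filtration: it is stable under conjugation,
and evaluation at `b i` identifies its `i`-th subquotient with `M` equivariantly, because
`φ g (b i) - b i` lies in the span of the `b l` with `l > i`, which these maps kill.
-/

open Module Submodule

theorem IsPGroup.exists_fixed_point_ne_zero {p : ℕ} [Fact p.Prime] {G V : Type*} [Group G]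
    [Finite G] (hG : IsPGroup p G) [AddCommGroup V] [DistribMulAction G V]
    (hV : ∀ v : V, p • v = 0) [Nontrivial V] : ∃ v : V, v ≠ 0 ∧ ∀ g : G, g • v = v := by
  obtain ⟨v₀, hv₀⟩ := exists_ne (0 : V)
  let A := AddSubgroup.closure (Set.range fun g : G => g • v₀)
  have hA : ∀ (g : G) {v : V}, v ∈ A → g • v ∈ A := by
    intro g v hv
    induction hv using AddSubgroup.closure_induction with
    | mem v hv =>
      obtain ⟨h, rfl⟩ := hv
      exact AddSubgroup.subset_closure ⟨g * h, mul_smul g h v₀⟩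
    | zero => simp
    | add v w _ _ hv hw => simpa only [smul_add] using add_mem hv hw
    | neg v _ hv => simpa only [smul_neg] using neg_mem hv
  let S : SubMulAction G V := ⟨A, fun g _ hv => hA g hv⟩
  have : Finite A := AddCommGroup.finite_of_fg_isAddTorsion A fun a =>
    isOfFinAddOrder_iff_nsmul_eq_zero.mpr ⟨p, (Fact.out : p.Prime).pos, Subtype.ext (hV a)⟩
  have hp : p ∣ Nat.card S := addOrderOf_eq_prime (hV v₀) hv₀ ▸
    A.addOrderOf_dvd_natCard (AddSubgroup.subset_closure ⟨1, one_smul G v₀⟩)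
  obtain ⟨v, hv, hne⟩ := hG.exists_fixed_point_of_prime_dvd_card_of_fixed_point S hp
    (a := ⟨0, A.zero_mem⟩) fun g => Subtype.ext (smul_zero g)
  exact ⟨v, fun h => hne (Subtype.ext h.symm), fun g => congrArg Subtype.val (hv g)⟩

namespace Representation

variable {k G V : Type*} [CommRing k] [Group G] [AddCommGroup V] [Module k V]

def IsLowerUnitriangular (φ : Representation k G V) {n : ℕ} (b : Basis (Fin n) k V) : Prop :=
  ∀ (g : G) (j : Fin n), φ g (b j) - b j ∈ span k (b '' Set.Ioi j)

theorem IsLowerUnitriangular.mkFinCons {φ : Representation k G V} {N : Submodule k V}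
    (hN : ∀ g, N ≤ N.comap (φ g)) {n : ℕ} {b : Basis (Fin n) k N}
    (hb : (φ.subrepresentation N hN).IsLowerUnitriangular b) {y : V} (hy : ∀ g, φ g y - y ∈ N)
    (hli : ∀ (c : k), ∀ x ∈ N, c • y + x = 0 → c = 0) (hsp : ∀ z : V, ∃ c : k, z + c • y ∈ N) :
    φ.IsLowerUnitriangular (Basis.mkFinCons y b hli hsp) := by
  set b' := Basis.mkFinCons y b hli hsp
  have hspan : ∀ (t : Set (Fin n)) (j : Fin (n + 1)), Fin.succ '' t ⊆ Set.Ioi j →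
      (span k (b '' t)).map N.subtype ≤ span k (b' '' Set.Ioi j) := by
    intro t j htj
    rw [map_span]
    refine span_mono ?_
    rintro _ ⟨_, ⟨l, hl, rfl⟩, rfl⟩
    exact ⟨l.succ, htj ⟨l, hl, rfl⟩, by simp [b']⟩
  intro g j
  induction j using Fin.cases with
  | zero =>
    refine hspan Set.univ 0 (fun _ ⟨l, _, hl⟩ => hl ▸ Fin.succ_pos l) ?_
    rw [Set.image_univ, b.span_eq, Submodule.map_top, range_subtype]
    simpa [b'] using hy g
  | succ j =>
    refine hspan (Set.Ioi j) j.succ (Fin.image_succ_Ioi j).le ?_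
    simpa [b'] using mem_map_of_mem (f := N.subtype) (hb g j)

end Representation

theorem IsPGroup.exists_basis_isLowerUnitriangular {p : ℕ} [Fact p.Prime] {G : Type*} [Group G]
    [Finite G] (hG : IsPGroup p G) {k V : Type*} [Field k] [CharP k p] [AddCommGroup V]
    [Module k V] [FiniteDimensional k V] (φ : Representation k G V) :
    ∃ b : Basis (Fin (finrank k V)) k V, φ.IsLowerUnitriangular b := by
  generalize hn : finrank k V = n
  induction n generalizing V with
  | zero => exact ⟨finBasisOfFinrankEq k V hn, fun _ j => j.elim0⟩
  | succ n ih =>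
    have : Nontrivial V := finrank_pos_iff (R := k).mp (by omega)
    let _ : DistribMulAction G (Dual k V) := DistribMulAction.compHom _ φ.dual
    obtain ⟨ξ, hξ0, hξ⟩ := hG.exists_fixed_point_ne_zero (V := Dual k V)
      fun ξ => by rw [← Nat.cast_smul_eq_nsmul k, CharP.cast_eq_zero, zero_smul]
    have hξφ : ∀ g x, ξ (φ g x) = ξ x := fun g x => by
      simpa [Dual.transpose_apply] using
        LinearMap.congr_fun (show φ.dual g⁻¹ ξ = ξ from hξ g⁻¹) x
    have hN : ∀ g, LinearMap.ker ξ ≤ (LinearMap.ker ξ).comap (φ g) := fun g x hx => by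
      simpa [hξφ] using hx
    obtain ⟨b, hb⟩ := ih (φ.subrepresentation _ hN)
      (by have := Dual.finrank_ker_add_one_of_ne_zero hξ0; omega)
    obtain ⟨y, hy⟩ := LinearMap.range_eq_top.mp (Dual.range_eq_top_of_ne_zero hξ0) 1
    exact ⟨_, hb.mkFinCons (y := y) hN (fun g => by simp [hξφ])
      (fun c x hx hcx => by simpa [hy, show ξ x = 0 from hx] using congrArg ξ hcx)
      (fun z => ⟨-ξ z, by simp [hy]⟩)⟩

namespace Module.Basis

variable {k F : Type*} [CommRing k] [AddCommGroup F] [Module k F] {n : ℕ}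
  (b : Basis (Fin n) k F) (M : Type*) [AddCommGroup M] [Module k M]

def homsVanishingFrom (i : ℕ) : Submodule k (F →ₗ[k] M) where
  carrier := {f | ∀ l : Fin n, i ≤ l → f (b l) = 0}
  add_mem' hf hg l hl := by simp [hf l hl, hg l hl]
  zero_mem' _ _ := LinearMap.zero_apply _
  smul_mem' c _ hf l hl := by simp [hf l hl]

theorem homsVanishingFrom_mono : Monotone (b.homsVanishingFrom M) :=
  fun _ _ hij _ hf l hl => hf l (hij.trans hl)

theorem homsVanishingFrom_zero : b.homsVanishingFrom M 0 = ⊥ :=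
  eq_bot_iff.mpr fun _ hf => b.ext fun l => hf l l.val.zero_le

theorem homsVanishingFrom_self : b.homsVanishingFrom M n = ⊤ :=
  eq_top_iff.mpr fun _ _ l hl => absurd l.isLt hl.not_gt

noncomputable def evalHomsVanishingFrom (i : Fin n) : b.homsVanishingFrom M (i + 1) →ₗ[k] M :=
  (LinearMap.applyₗ (b i)).comp (b.homsVanishingFrom M (i + 1)).subtype

theorem ker_evalHomsVanishingFrom (i : Fin n) :
    LinearMap.ker (b.evalHomsVanishingFrom M i) =
      (b.homsVanishingFrom M i).comap (b.homsVanishingFrom M (i + 1)).subtype := by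
  ext ⟨f, hf⟩
  simp only [evalHomsVanishingFrom, LinearMap.mem_ker, LinearMap.comp_apply, subtype_apply,
    LinearMap.applyₗ_apply_apply, mem_comap]
  refine ⟨fun h l hl => ?_, fun h => h i le_rfl⟩
  rcases hl.eq_or_lt with hil | hil
  · rwa [show l = i from Fin.ext hil.symm]
  · exact hf l hil

theorem evalHomsVanishingFrom_surjective (i : Fin n) :
    Function.Surjective (b.evalHomsVanishingFrom M i) :=
  fun m => ⟨⟨(b.coord i).smulRight m, fun l hl => by
    simp [Fin.ext_iff, (Nat.lt_of_succ_le hl).ne]⟩, by simp [evalHomsVanishingFrom]⟩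

noncomputable def homsVanishingFromQuotEquiv (i : Fin n) :
    (b.homsVanishingFrom M (i + 1) ⧸
      (b.homsVanishingFrom M i).comap (b.homsVanishingFrom M (i + 1)).subtype) ≃ₗ[k] M :=
  (quotEquivOfEq _ _ (b.ker_evalHomsVanishingFrom M i).symm).trans
    (LinearMap.quotKerEquivOfSurjective _ (b.evalHomsVanishingFrom_surjective M i))

@[simp]
theorem homsVanishingFromQuotEquiv_mk (i : Fin n) (f : b.homsVanishingFrom M (i + 1)) :
    b.homsVanishingFromQuotEquiv M i (Submodule.Quotient.mk f) = f.1 (b i) := rfl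

variable {b M}

theorem apply_eq_zero_of_mem_homsVanishingFrom {j : Fin n} {f : F →ₗ[k] M}
    (hf : f ∈ b.homsVanishingFrom M (j + 1)) {v : F} (hv : v ∈ span k (b '' Set.Ioi j)) :
    f v = 0 := by
  refine (span_le (p := LinearMap.ker f)).mpr ?_ hv
  rintro _ ⟨l, hl, rfl⟩
  exact hf l hl

end Module.Basis

namespace Representation.IsLowerUnitriangular

variable {k G F M : Type*} [CommRing k] [Group G] [AddCommGroup F] [Module k F]
  [AddCommGroup M] [Module k M] {φ : Representation k G F} {n : ℕ} {b : Basis (Fin n) k F}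

theorem apply_apply_basis_eq (hb : φ.IsLowerUnitriangular b) (g : G) {j : Fin n}
    {f : F →ₗ[k] M} (hf : f ∈ b.homsVanishingFrom M (j + 1)) : f (φ g (b j)) = f (b j) :=
  sub_eq_zero.mp <| by
    rw [← map_sub]
    exact Basis.apply_eq_zero_of_mem_homsVanishingFrom hf (hb g j)

variable (σ : Representation k G M)

theorem linHom_mem_homsVanishingFrom (hb : φ.IsLowerUnitriangular b) (g : G) {i : ℕ}
    {f : F →ₗ[k] M} (hf : f ∈ b.homsVanishingFrom M i) :
    linHom φ σ g f ∈ b.homsVanishingFrom M i := by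
  intro l hl
  have hf' := b.homsVanishingFrom_mono M (Nat.le_succ_of_le hl) hf
  simp [hb.apply_apply_basis_eq g⁻¹ hf', hf l hl]

theorem homsVanishingFromQuotEquiv_linHom (hb : φ.IsLowerUnitriangular b) (g : G) (i : Fin n)
    (f : b.homsVanishingFrom M (i + 1))
    (hgf : linHom φ σ g f.1 ∈ b.homsVanishingFrom M (i + 1)) :
    b.homsVanishingFromQuotEquiv M i (Submodule.Quotient.mk ⟨linHom φ σ g f.1, hgf⟩) =
      σ g (b.homsVanishingFromQuotEquiv M i (Submodule.Quotient.mk f)) := by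
  simp [hb.apply_apply_basis_eq g⁻¹ f.2]

end Representation.IsLowerUnitriangular

/-- Let `k` be a field of characteristic `p > 0`, `E` a finite `p`-group, `(F, φ)` a
finite-dimensional `k`-linear representation of `E` and `(M, σ)` an arbitrary `k`-linear
representation of `E`. Then `Hom_k(F, M)` with the conjugation action
`(g • f)(x) = σ g (f (φ g⁻¹ x))` has a filtration `0 = X 0 ≤ X 1 ≤ ⋯ ≤ X n = ⊤` by
`E`-subrepresentations, with `n = dim_k F`, whose successive subquotients are all
isomorphic to `M` as representations of `E`. -/
theorem stmt15 (k : Type*) [Field k] (p : ℕ) [Fact p.Prime] [CharP k p]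
    (E : Type*) [Group E] [Finite E] (hE : IsPGroup p E)
    (F M : Type*) [AddCommGroup F] [Module k F] [FiniteDimensional k F]
    [AddCommGroup M] [Module k M]
    (φ : Representation k E F) (σ : Representation k E M) :
    ∃ X : Fin (Module.finrank k F + 1) → Submodule k (F →ₗ[k] M),
      Monotone X ∧ X 0 = ⊥ ∧ X (Fin.last _) = ⊤ ∧
      ∃ hinv : ∀ (i) (g : E), ∀ f ∈ X i, (Representation.linHom φ σ) g f ∈ X i,
      ∀ i : Fin (Module.finrank k F),
        ∃ e : (X i.succ ⧸ (X i.castSucc).comap (X i.succ).subtype) ≃ₗ[k] M,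
          ∀ (g : E) (f : X i.succ),
            e (Submodule.Quotient.mk
                  ⟨(Representation.linHom φ σ) g f.1, hinv i.succ g f.1 f.2⟩)
              = σ g (e (Submodule.Quotient.mk f)) := by
  obtain ⟨b, hb⟩ := hE.exists_basis_isLowerUnitriangular φ
  exact ⟨fun i => b.homsVanishingFrom M i,
    (b.homsVanishingFrom_mono M).comp Fin.val_strictMono.monotone,
    b.homsVanishingFrom_zero M, b.homsVanishingFrom_self M,
    fun _ g _ hf => hb.linHom_mem_homsVanishingFrom σ g hf,
    fun i => ⟨b.homsVanishingFromQuotEquiv M i,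
      fun g f => hb.homsVanishingFromQuotEquiv_linHom σ g i f _⟩⟩
end
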